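/- arXiv:1106.3622 — 5 statements merged into one kernel-verified Lean document; each statement's English description precedes it below -/
import Mathlib

section
/- Let G be a finite simple graph with diameter at most 2, and let v and w be distinct vertices of G. Let d := min{deg(v), deg(w)}. Then there exist d pairwise edge-disjoint paths between v and w in G, each of length at most 4. -/
set_option maxHeartbeats 1000000

private lemma sum_swap_lt {k : ℕ} (g g' : Fin k → ℕ) (i j : Fin k) (hij : i ≠ j)
    (hsame : ∀ t, t ≠ i → t ≠ j → g' t = g t) (hlt : g i + g j < g' i + g' j) :
    (∑ t, g t) < ∑ t, g' t := by
  classical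
  have hmem : j ∈ Finset.univ.erase i := Finset.mem_erase.2 ⟨hij.symm, Finset.mem_univ j⟩
  have h1 : ∀ h : Fin k → ℕ,
      ∑ t, h t = h i + (h j + ∑ t ∈ (Finset.univ.erase i).erase j, h t) := by
    intro h
    rw [← Finset.add_sum_erase _ _ (Finset.mem_univ i), ← Finset.add_sum_erase _ _ hmem]
  have h2 : ∑ t ∈ (Finset.univ.erase i).erase j, g t
      = ∑ t ∈ (Finset.univ.erase i).erase j, g' t := by
    apply Finset.sum_congr rfl
    intro t ht
    rw [Finset.mem_erase, Finset.mem_erase] at ht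
    exact (hsame t ht.2.1 ht.1).symm
  rw [h1 g, h1 g', h2]
  omega

private lemma exists_mid {V : Type*} {G : SimpleGraph V} (hconn : G.Connected)
    (hdiam : ∀ u v : V, G.dist u v ≤ 2) {a b : V} (hab : a ≠ b) (hnadj : ¬ G.Adj a b) :
    ∃ c, G.Adj a c ∧ G.Adj c b := by
  have h0 : G.dist a b ≠ 0 := by
    rw [SimpleGraph.dist_ne_zero_iff_ne_and_reachable]
    exact ⟨hab, hconn.preconnected a b⟩
  have h1 : G.dist a b ≠ 1 := fun h => hnadj (SimpleGraph.dist_eq_one_iff_adj.mp h)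
  have h2 : G.dist a b = 2 := by have := hdiam a b; omega
  obtain ⟨p, hp⟩ := SimpleGraph.exists_walk_of_dist_ne_zero h0
  rw [h2] at hp
  cases p with
  | nil => simp at hp
  | cons h q =>
    cases q with
    | nil => simp at hp
    | cons h' r =>
      cases r with
      | nil => exact ⟨_, h, h'⟩
      | cons h'' r' => simp [SimpleGraph.Walk.length_cons] at hp

private lemma disj_aux {V : Type*} (G : SimpleGraph V) (v w a b c a' b' c' : V)
    (hvw : v ≠ w)
    (hva : G.Adj v a) (hbw : G.Adj b w) (hva' : G.Adj v a') (hbw' : G.Adj b' w)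
    (haw : a ≠ w) (hbv : b ≠ v) (haw' : a' ≠ w) (hbv' : b' ≠ v)
    (haa : a ≠ a') (hbb : b ≠ b')
    (hcv : c ≠ v) (hcw : c ≠ w) (hcv' : c' ≠ v) (hcw' : c' ≠ w)
    (hi : (b = a ∧ c = a) ∨
      (¬ G.Adj a w ∧ ¬ G.Adj v b ∧ (c = a ∨ (G.Adj a c ∧ G.Adj c b ∧ ¬ G.Adj a b))))
    (hj : (b' = a' ∧ c' = a') ∨
      (¬ G.Adj a' w ∧ ¬ G.Adj v b' ∧ (c' = a' ∨ (G.Adj a' c' ∧ G.Adj c' b' ∧ ¬ G.Adj a' b'))))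
    (hcross : ¬ G.Adj a b → a ≠ b → ¬ G.Adj a' b' → a' ≠ b' →
      ¬ G.Adj a b' ∧ ¬ G.Adj a' b) :
    List.Disjoint [s(v,a), s(a,c), s(c,b), s(b,w)]
      [s(v,a'), s(a',c'), s(c',b'), s(b',w)] := by
  have hav : a ≠ v := hva.ne'
  have hav' : a' ≠ v := hva'.ne'
  have hvai : v ≠ a := hva.ne
  have hvai' : v ≠ a' := hva'.ne
  have hbwne : b ≠ w := hbw.ne
  have hbwne' : b' ≠ w := hbw'.ne
  have hwb : w ≠ b := hbw.ne'
  have hwb' : w ≠ b' := hbw'.ne'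
  have hwv : w ≠ v := hvw.symm
  have hvc : v ≠ c := fun h => hcv h.symm
  have hvc' : v ≠ c' := fun h => hcv' h.symm
  have hwc : w ≠ c := fun h => hcw h.symm
  have hwc' : w ≠ c' := fun h => hcw' h.symm
  have haa2 : a' ≠ a := haa.symm
  have hbb2 : b' ≠ b := hbb.symm
  have hvb' : v ≠ b' := fun h => hbv' h.symm
  have hvb : v ≠ b := fun h => hbv h.symm
  have hwa : w ≠ a := fun h => haw h.symm
  have hwa' : w ≠ a' := fun h => haw' h.symm
  have X1 : a ≠ b' := by
    intro h
    rcases hj with ⟨h1, _⟩ | ⟨_, h2, _⟩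
    · exact haa (h.trans h1)
    · exact h2 (h ▸ hva)
  have X1' : a' ≠ b := by
    intro h
    rcases hi with ⟨h1, _⟩ | ⟨_, h2, _⟩
    · exact haa (h.trans h1).symm
    · exact h2 (h ▸ hva')
  have X1b : b ≠ a' := fun h => X1' h.symm
  have X2 : ¬ (a = c' ∧ c = a') := by
    rintro ⟨h1, h2⟩
    rcases hj with ⟨_, h3⟩ | ⟨hna'w, hnvb', h3 | ⟨hja, hjb, hjn⟩⟩
    · exact haa (h1.trans h3)
    · exact haa (h1.trans h3)
    · have hab' : G.Adj a b' := by rw [h1]; exact hjb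
      rcases hi with ⟨_, h4⟩ | ⟨hnaw, hnvb, h4 | ⟨hia, hib, hin⟩⟩
      · exact haa (h4.symm.trans h2)
      · exact haa (h4.symm.trans h2)
      · have hne : a ≠ b := fun h => hnaw (by rw [h]; exact hbw)
        have hne' : a' ≠ b' := fun h => hna'w (by rw [h]; exact hbw')
        exact (hcross hin hne hjn hne').1 hab'
  have X3 : ¬ (a = c' ∧ c = b') := by
    rintro ⟨h1, h2⟩
    rcases hj with ⟨_, h3⟩ | ⟨hna'w, hnvb', h3 | ⟨hja, hjb, hjn⟩⟩
    · exact haa (h1.trans h3)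
    · exact haa (h1.trans h3)
    · rcases hi with ⟨_, h4⟩ | ⟨hnaw, hnvb, h4 | ⟨hia, hib, hin⟩⟩
      · exact X1 (h4.symm.trans h2)
      · exact X1 (h4.symm.trans h2)
      · have hne : a ≠ b := fun h => hnaw (by rw [h]; exact hbw)
        have hne' : a' ≠ b' := fun h => hna'w (by rw [h]; exact hbw')
        have hab' : G.Adj a b' := by rw [← h2]; exact hia
        exact (hcross hin hne hjn hne').1 hab'
  have X4 : ¬ (c = a' ∧ b = c') := by
    rintro ⟨h1, h2⟩
    rcases hi with ⟨_, h4⟩ | ⟨hnaw, hnvb, h4 | ⟨hia, hib, hin⟩⟩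
    · exact haa (h4.symm.trans h1)
    · exact haa (h4.symm.trans h1)
    · rcases hj with ⟨_, h3⟩ | ⟨hna'w, hnvb', h3 | ⟨hja, hjb, hjn⟩⟩
      · exact X1b (h2.trans h3)
      · exact X1b (h2.trans h3)
      · have hne : a ≠ b := fun h => hnaw (by rw [h]; exact hbw)
        have hne' : a' ≠ b' := fun h => hna'w (by rw [h]; exact hbw')
        have ha'b : G.Adj a' b := by rw [h2]; exact hja
        exact (hcross hin hne hjn hne').2 ha'b
  have X5 : ¬ (c = b' ∧ b = c') := by
    rintro ⟨h1, h2⟩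
    rcases hi with ⟨_, h4⟩ | ⟨hnaw, hnvb, h4 | ⟨hia, hib, hin⟩⟩
    · exact X1 (h4.symm.trans h1)
    · exact X1 (h4.symm.trans h1)
    · rcases hj with ⟨_, h3⟩ | ⟨hna'w, hnvb', h3 | ⟨hja, hjb, hjn⟩⟩
      · exact X1b (h2.trans h3)
      · exact X1b (h2.trans h3)
      · have hne : a ≠ b := fun h => hnaw (by rw [h]; exact hbw)
        have hne' : a' ≠ b' := fun h => hna'w (by rw [h]; exact hbw')
        have ha'b : G.Adj a' b := by rw [h2]; exact hja
        exact (hcross hin hne hjn hne').2 ha'b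
  intro x hx hx'
  simp only [List.mem_cons, List.not_mem_nil, or_false] at hx hx'
  rcases hx with rfl | rfl | rfl | rfl <;>
      rcases hx' with h | h | h | h <;> rw [Sym2.eq_iff] at h
  · exact h.elim (fun q => haa q.2) (fun q => hvai' q.1)
  · exact h.elim (fun q => hvai' q.1) (fun q => hvc' q.1)
  · exact h.elim (fun q => hvc' q.1) (fun q => hvb' q.1)
  · exact h.elim (fun q => hvb' q.1) (fun q => hvw q.1)
  · exact h.elim (fun q => hav q.1) (fun q => haa q.1)
  · exact h.elim (fun q => haa q.1) (fun q => X2 q)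
  · exact h.elim (fun q => X3 q) (fun q => X1 q.1)
  · exact h.elim (fun q => X1 q.1) (fun q => haw q.1)
  · exact h.elim (fun q => hcv q.1) (fun q => hbv q.2)
  · exact h.elim (fun q => X4 q) (fun q => X1b q.2)
  · exact h.elim (fun q => hbb q.2) (fun q => X5 q)
  · exact h.elim (fun q => hbwne q.2) (fun q => hcw q.1)
  · exact h.elim (fun q => hbv q.1) (fun q => hwv q.2)
  · exact h.elim (fun q => X1b q.1) (fun q => hwa' q.2)
  · exact h.elim (fun q => hwb' q.2) (fun q => hbb q.1)
  · exact h.elim (fun q => hbb q.1) (fun q => hbwne q.1)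

/-- Let `G` be a finite simple graph with diameter at most 2 (i.e. `G` is connected and any
two vertices are at distance at most 2), and let `v ≠ w` be vertices of `G`. Let
`d := min (deg v) (deg w)`. Then there exist `d` pairwise edge-disjoint paths between
`v` and `w` in `G`, each of length at most 4. -/
theorem edge_disjoint_short_paths_of_diameter_le_two
    {V : Type*} [Fintype V] (G : SimpleGraph V) [DecidableRel G.Adj]
    (hconn : G.Connected) (hdiam : ∀ u v : V, G.dist u v ≤ 2)
    (v w : V) (hvw : v ≠ w) :
    ∃ f : Fin (min (G.degree v) (G.degree w)) → G.Walk v w,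
      (∀ i, (f i).IsPath ∧ (f i).length ≤ 4) ∧
      ∀ i j, i ≠ j → List.Disjoint (f i).edges (f j).edges := by
  classical
  set A : Finset V := (G.neighborFinset v).erase w with hA
  set B : Finset V := (G.neighborFinset w).erase v with hB
  have hAmem : ∀ x, x ∈ A → G.Adj v x ∧ x ≠ w := by
    intro x hx
    rw [hA, Finset.mem_erase, SimpleGraph.mem_neighborFinset] at hx
    exact ⟨hx.2, hx.1⟩
  have hBmem : ∀ x, x ∈ B → G.Adj x w ∧ x ≠ v := by
    intro x hx
    rw [hB, Finset.mem_erase, SimpleGraph.mem_neighborFinset] at hx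
    exact ⟨hx.2.symm, hx.1⟩
  have master : ∀ k : ℕ, k ≤ A.card → k ≤ B.card →
      ∃ P : Fin k → G.Walk v w,
        (∀ i, (P i).IsPath ∧ (P i).length ≤ 4 ∧ s(v,w) ∉ (P i).edges) ∧
        (∀ i j, i ≠ j → List.Disjoint (P i).edges (P j).edges) := by
    intro k hkA hkB
    obtain ⟨f1⟩ : Nonempty (Fin k ↪ ↥A) :=
      Function.Embedding.nonempty_of_card_le (by simpa [Fintype.card_coe] using hkA)
    obtain ⟨f2⟩ : Nonempty (Fin k ↪ ↥B) :=
      Function.Embedding.nonempty_of_card_le (by simpa [Fintype.card_coe] using hkB)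
    set sc : V → V → ℕ := fun x y => if x = y then 3 else if G.Adj x y then 1 else 0 with hsc
    have sc3 : ∀ x : V, sc x x = 3 := fun x => by simp [hsc]
    have scle : ∀ x y : V, x ≠ y → sc x y ≤ 1 := by
      intro x y h
      simp only [hsc, if_neg h]
      split <;> omega
    have scz : ∀ x y : V, x ≠ y → ¬ G.Adj x y → sc x y = 0 := by
      intro x y h h'
      simp [hsc, if_neg h, if_neg h']
    have scpos : ∀ x y : V, G.Adj x y → 1 ≤ sc x y := by
      intro x y h
      simp only [hsc]
      by_cases hxy : x = y
      · rw [if_pos hxy]; omega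
      · rw [if_neg hxy, if_pos h]
    haveI hne : Nonempty {q : Fin k → ↥A × ↥B //
        Function.Injective (fun t => (q t).1) ∧ Function.Injective (fun t => (q t).2)} :=
      ⟨⟨fun t => (f1 t, f2 t), fun s t h => f1.injective h, fun s t h => f2.injective h⟩⟩
    obtain ⟨⟨q, hq1, hq2⟩, hmax⟩ := Finite.exists_max
      (fun q : {q : Fin k → ↥A × ↥B //
        Function.Injective (fun t => (q t).1) ∧ Function.Injective (fun t => (q t).2)} =>
        ∑ t, sc ((q.1 t).1 : V) ((q.1 t).2 : V))
    set a : Fin k → V := fun t => ((q t).1 : V) with ha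
    set b : Fin k → V := fun t => ((q t).2 : V) with hb2
    have hainj : ∀ s t, a s = a t → s = t := fun s t h => hq1 (Subtype.ext h)
    have hbinj : ∀ s t, b s = b t → s = t := fun s t h => hq2 (Subtype.ext h)
    have haA : ∀ t, a t ∈ A := fun t => (q t).1.2
    have hbB : ∀ t, b t ∈ B := fun t => (q t).2.2
    have hva' : ∀ t, G.Adj v (a t) := fun t => (hAmem _ (haA t)).1
    have haw' : ∀ t, a t ≠ w := fun t => (hAmem _ (haA t)).2
    have hbw' : ∀ t, G.Adj (b t) w := fun t => (hBmem _ (hbB t)).1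
    have hbv' : ∀ t, b t ≠ v := fun t => (hBmem _ (hbB t)).2
    -- Claim 1a
    have claim1a : ∀ i, a i ≠ b i → ¬ G.Adj (a i) w := by
      intro i hnei hadjw
      have hmemB : a i ∈ B := by
        rw [hB, Finset.mem_erase, SimpleGraph.mem_neighborFinset]
        exact ⟨(hva' i).ne', hadjw.symm⟩
      by_cases hex : ∃ j, b j = a i
      · obtain ⟨j, hj⟩ := hex
        have hij : i ≠ j := by
          intro h
          rw [← h] at hj
          exact hnei hj.symm
        have hinj2' : Function.Injective (fun t => (q (Equiv.swap i j t)).2) :=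
          fun s t h => (Equiv.swap i j).injective (hq2 h)
        have hle := hmax ⟨fun t => ((q t).1, (q (Equiv.swap i j t)).2), hq1, hinj2'⟩
        have hlt : (∑ t, sc (a t) (b t)) < ∑ t, sc (a t) (b (Equiv.swap i j t)) := by
          apply sum_swap_lt _ _ i j hij
          · intro t ht1 ht2
            rw [Equiv.swap_apply_of_ne_of_ne ht1 ht2]
          · rw [Equiv.swap_apply_left, Equiv.swap_apply_right, hj, sc3]
            have e1 : sc (a i) (b i) ≤ 1 := scle _ _ hnei
            have e2 : sc (a j) (a i) ≤ 1 :=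
              scle _ _ (fun h => hij (hainj _ _ h).symm)
            omega
        exact absurd hle (not_le.mpr hlt)
      · push_neg at hex
        have hinj2' : Function.Injective
            (fun t => if t = i then (⟨a i, hmemB⟩ : ↥B) else (q t).2) := by
          intro s t h
          simp only at h
          by_cases hs : s = i <;> by_cases ht : t = i
          · rw [hs, ht]
          · rw [if_pos hs, if_neg ht] at h
            exact absurd (congrArg Subtype.val h).symm (hex t)
          · rw [if_neg hs, if_pos ht] at h
            exact absurd (congrArg Subtype.val h) (hex s)
          · rw [if_neg hs, if_neg ht] at h
            exact hq2 h
        have hle := hmax ⟨fun t => ((q t).1,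
          if t = i then (⟨a i, hmemB⟩ : ↥B) else (q t).2), hq1, hinj2'⟩
        have hlt : (∑ t, sc (a t) (b t))
            < ∑ t, sc (a t) (Subtype.val (if t = i then (⟨a i, hmemB⟩ : ↥B) else (q t).2)) := by
          apply Finset.sum_lt_sum
          · intro t _
            by_cases ht : t = i
            · subst ht
              have h3' : Subtype.val (if t = t then (⟨a t, hmemB⟩ : ↥B) else (q t).2) = a t := by
                simp
              rw [h3', sc3]
              have := scle _ _ hnei
              omega
            · rw [if_neg ht]
          · refine ⟨i, Finset.mem_univ i, ?_⟩
            have h3' : Subtype.val (if i = i then (⟨a i, hmemB⟩ : ↥B) else (q i).2) = a i := by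
              simp
            rw [h3', sc3]
            have := scle _ _ hnei
            omega
        exact absurd hle (not_le.mpr hlt)
    -- Claim 1b
    have claim1b : ∀ i, a i ≠ b i → ¬ G.Adj v (b i) := by
      intro i hnei hadjv
      have hmemA : b i ∈ A := by
        rw [hA, Finset.mem_erase, SimpleGraph.mem_neighborFinset]
        exact ⟨(hbw' i).ne, hadjv⟩
      by_cases hex : ∃ j, a j = b i
      · obtain ⟨j, hj⟩ := hex
        have hij : i ≠ j := by
          intro h
          rw [← h] at hj
          exact hnei hj
        have hinj1' : Function.Injective (fun t => (q (Equiv.swap i j t)).1) :=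
          fun s t h => (Equiv.swap i j).injective (hq1 h)
        have hle := hmax ⟨fun t => ((q (Equiv.swap i j t)).1, (q t).2), hinj1', hq2⟩
        have hlt : (∑ t, sc (a t) (b t)) < ∑ t, sc (a (Equiv.swap i j t)) (b t) := by
          apply sum_swap_lt _ _ i j hij
          · intro t ht1 ht2
            rw [Equiv.swap_apply_of_ne_of_ne ht1 ht2]
          · rw [Equiv.swap_apply_left, Equiv.swap_apply_right, hj, sc3]
            have e1 : sc (a i) (b i) ≤ 1 := scle _ _ hnei
            have e2 : sc (b i) (b j) ≤ 1 :=
              scle _ _ (fun h => hij (hbinj _ _ h))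
            omega
        exact absurd hle (not_le.mpr hlt)
      · push_neg at hex
        have hinj1' : Function.Injective
            (fun t => if t = i then (⟨b i, hmemA⟩ : ↥A) else (q t).1) := by
          intro s t h
          simp only at h
          by_cases hs : s = i <;> by_cases ht : t = i
          · rw [hs, ht]
          · rw [if_pos hs, if_neg ht] at h
            exact absurd (congrArg Subtype.val h).symm (hex t)
          · rw [if_neg hs, if_pos ht] at h
            exact absurd (congrArg Subtype.val h) (hex s)
          · rw [if_neg hs, if_neg ht] at h
            exact hq1 h
        have hle := hmax ⟨fun t =>
          ((if t = i then (⟨b i, hmemA⟩ : ↥A) else (q t).1), (q t).2), hinj1', hq2⟩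
        have hlt : (∑ t, sc (a t) (b t))
            < ∑ t, sc (Subtype.val (if t = i then (⟨b i, hmemA⟩ : ↥A) else (q t).1)) (b t) := by
          apply Finset.sum_lt_sum
          · intro t _
            by_cases ht : t = i
            · subst ht
              have h3' : Subtype.val (if t = t then (⟨b t, hmemA⟩ : ↥A) else (q t).1) = b t := by
                simp
              rw [h3', sc3]
              have := scle _ _ hnei
              omega
            · rw [if_neg ht]
          · refine ⟨i, Finset.mem_univ i, ?_⟩
            have h3' : Subtype.val (if i = i then (⟨b i, hmemA⟩ : ↥A) else (q i).1) = b i := by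
              simp
            rw [h3', sc3]
            have := scle _ _ hnei
            omega
        exact absurd hle (not_le.mpr hlt)
    -- Claim 2
    have claim2 : ∀ i j, i ≠ j → ¬ G.Adj (a i) (b i) → a i ≠ b i →
        ¬ G.Adj (a j) (b j) → a j ≠ b j → ¬ G.Adj (a i) (b j) := by
      intro i j hij hni hnei hnj hnej hadj'
      have hinj2' : Function.Injective (fun t => (q (Equiv.swap i j t)).2) :=
        fun s t h => (Equiv.swap i j).injective (hq2 h)
      have hle := hmax ⟨fun t => ((q t).1, (q (Equiv.swap i j t)).2), hq1, hinj2'⟩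
      have hlt : (∑ t, sc (a t) (b t)) < ∑ t, sc (a t) (b (Equiv.swap i j t)) := by
        apply sum_swap_lt _ _ i j hij
        · intro t ht1 ht2
          rw [Equiv.swap_apply_of_ne_of_ne ht1 ht2]
        · rw [Equiv.swap_apply_left, Equiv.swap_apply_right]
          have e1 := scz _ _ hnei hni
          have e2 := scz _ _ hnej hnj
          have e3 := scpos _ _ hadj'
          omega
      exact absurd hle (not_le.mpr hlt)
    -- construction of the walks
    have key : ∀ i, ∃ (W : G.Walk v w) (c : V), W.IsPath ∧ W.length ≤ 4 ∧
        (∀ e ∈ W.edges, e ∈ [s(v, a i), s(a i, c), s(c, b i), s(b i, w)]) ∧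
        c ≠ v ∧ c ≠ w ∧
        ((a i = b i ∧ c = a i) ∨ (c = a i ∧ G.Adj (a i) (b i)) ∨
          (G.Adj (a i) c ∧ G.Adj c (b i) ∧ ¬ G.Adj (a i) (b i) ∧ a i ≠ b i)) := by
      intro i
      have h1 : G.Adj v (a i) := hva' i
      have h2 : G.Adj (b i) w := hbw' i
      have h3 : a i ≠ w := haw' i
      have h4 : b i ≠ v := hbv' i
      by_cases heq : a i = b i
      · refine ⟨SimpleGraph.Walk.cons h1 (SimpleGraph.Walk.cons (heq ▸ h2)
          SimpleGraph.Walk.nil), a i, ?_, ?_, ?_, h1.ne', h3, Or.inl ⟨heq, rfl⟩⟩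
        · simp [SimpleGraph.Walk.isPath_def, h1.ne, h3, hvw]
        · simp
        · intro e he
          simp only [SimpleGraph.Walk.edges_cons, SimpleGraph.Walk.edges_nil, List.mem_cons,
            List.not_mem_nil, or_false] at he
          rcases he with rfl | rfl
          · simp
          · simp [heq]
      · have hnadjaw : ¬ G.Adj (a i) w := claim1a i heq
        have hnadjvb : ¬ G.Adj v (b i) := claim1b i heq
        by_cases hadj2 : G.Adj (a i) (b i)
        · refine ⟨SimpleGraph.Walk.cons h1 (SimpleGraph.Walk.cons hadj2
            (SimpleGraph.Walk.cons h2 SimpleGraph.Walk.nil)), a i, ?_, ?_, ?_,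
            h1.ne', h3, Or.inr (Or.inl ⟨rfl, hadj2⟩)⟩
          · simp [SimpleGraph.Walk.isPath_def, h1.ne, h3, hvw, heq, h2.ne, Ne.symm h4]
          · simp
          · intro e he
            simp only [SimpleGraph.Walk.edges_cons, SimpleGraph.Walk.edges_nil, List.mem_cons,
              List.not_mem_nil, or_false] at he
            rcases he with rfl | rfl | rfl <;> simp
        · obtain ⟨c, hac, hcb⟩ := exists_mid hconn hdiam heq hadj2
          have hcv : c ≠ v := fun h => hnadjvb (h ▸ hcb)
          have hcw : c ≠ w := fun h => hnadjaw (h ▸ hac)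
          refine ⟨SimpleGraph.Walk.cons h1 (SimpleGraph.Walk.cons hac
            (SimpleGraph.Walk.cons hcb (SimpleGraph.Walk.cons h2 SimpleGraph.Walk.nil))),
            c, ?_, ?_, ?_, hcv, hcw, Or.inr (Or.inr ⟨hac, hcb, hadj2, heq⟩)⟩
          · simp [SimpleGraph.Walk.isPath_def, h1.ne, h3, hvw, heq, h2.ne, Ne.symm h4,
              hac.ne, hcb.ne, hcw, Ne.symm hcv]
          · simp
          · intro e he
            simp only [SimpleGraph.Walk.edges_cons, SimpleGraph.Walk.edges_nil, List.mem_cons,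
              List.not_mem_nil, or_false] at he
            rcases he with rfl | rfl | rfl | rfl <;> simp
    choose W c hpath hlen hsub hcv hcw hshape using key
    refine ⟨W, ?_, ?_⟩
    · intro i
      refine ⟨hpath i, hlen i, ?_⟩
      intro hmem
      have hm := hsub i _ hmem
      simp only [List.mem_cons, List.not_mem_nil, or_false] at hm
      rcases hm with h | h | h | h <;> rw [Sym2.eq_iff] at h
      · exact h.elim (fun q2 => (haw' i) q2.2.symm) (fun q2 => hvw q2.2.symm)
      · exact h.elim (fun q2 => (hva' i).ne q2.1) (fun q2 => (hcv i) q2.1.symm)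
      · exact h.elim (fun q2 => (hcv i) q2.1.symm) (fun q2 => (hbv' i) q2.1.symm)
      · exact h.elim (fun q2 => (hbv' i) q2.1.symm) (fun q2 => hvw q2.1)
    · intro i j hij
      have hmk : ∀ t, (b t = a t ∧ c t = a t) ∨
          (¬ G.Adj (a t) w ∧ ¬ G.Adj v (b t) ∧ (c t = a t ∨
            (G.Adj (a t) (c t) ∧ G.Adj (c t) (b t) ∧ ¬ G.Adj (a t) (b t)))) := by
        intro t
        rcases hshape t with ⟨e1, e2⟩ | ⟨e1, e2⟩ | ⟨e1, e2, e3, e4⟩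
        · exact Or.inl ⟨e1.symm, e2⟩
        · exact Or.inr ⟨claim1a t e2.ne, claim1b t e2.ne, Or.inl e1⟩
        · exact Or.inr ⟨claim1a t e4, claim1b t e4, Or.inr ⟨e1, e2, e3⟩⟩
      have hcross' : ¬ G.Adj (a i) (b i) → a i ≠ b i → ¬ G.Adj (a j) (b j) → a j ≠ b j →
          ¬ G.Adj (a i) (b j) ∧ ¬ G.Adj (a j) (b i) :=
        fun p1 p2 p3 p4 => ⟨claim2 i j hij p1 p2 p3 p4, claim2 j i hij.symm p3 p4 p1 p2⟩
      have hd := disj_aux G v w (a i) (b i) (c i) (a j) (b j) (c j) hvw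
        (hva' i) (hbw' i) (hva' j) (hbw' j) (haw' i) (hbv' i) (haw' j) (hbv' j)
        (fun h => hij (hainj _ _ h)) (fun h => hij (hbinj _ _ h))
        (hcv i) (hcw i) (hcv j) (hcw j) (hmk i) (hmk j) hcross'
      intro x hx hx'
      exact hd (hsub i x hx) (hsub j x hx')
  by_cases hadj : G.Adj v w
  · -- v adjacent to w
    have hwmem : w ∈ G.neighborFinset v := (SimpleGraph.mem_neighborFinset _ _ _).2 hadj
    have hvmem : v ∈ G.neighborFinset w := (SimpleGraph.mem_neighborFinset _ _ _).2 hadj.symm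
    have hd1 : 1 ≤ min (G.degree v) (G.degree w) := by
      rw [le_min_iff]
      constructor
      · rw [← SimpleGraph.card_neighborFinset_eq_degree]
        exact Finset.card_pos.2 ⟨w, hwmem⟩
      · rw [← SimpleGraph.card_neighborFinset_eq_degree]
        exact Finset.card_pos.2 ⟨v, hvmem⟩
    set d := min (G.degree v) (G.degree w) with hd
    set k := d - 1 with hk
    have hdk : d = k + 1 := by omega
    have hkA : k ≤ A.card := by
      rw [hA, Finset.card_erase_of_mem hwmem, SimpleGraph.card_neighborFinset_eq_degree]
      exact Nat.sub_le_sub_right (min_le_left _ _) 1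
    have hkB : k ≤ B.card := by
      rw [hB, Finset.card_erase_of_mem hvmem, SimpleGraph.card_neighborFinset_eq_degree]
      exact Nat.sub_le_sub_right (min_le_right _ _) 1
    obtain ⟨P, h1, h2⟩ := master k hkA hkB
    refine ⟨fun i => if h : (i : ℕ) < k then P ⟨i, h⟩
      else SimpleGraph.Walk.cons hadj SimpleGraph.Walk.nil, ?_, ?_⟩
    · intro i
      by_cases h : (i : ℕ) < k
      · simp only [dif_pos h]
        exact ⟨(h1 _).1, (h1 _).2.1⟩
      · simp only [dif_neg h]
        constructor
        · simp [SimpleGraph.Walk.isPath_def, hvw]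
        · simp
    · intro i j hij
      by_cases hi' : (i : ℕ) < k <;> by_cases hj' : (j : ℕ) < k
      · simp only [dif_pos hi', dif_pos hj']
        have hne : (⟨(i:ℕ), hi'⟩ : Fin _) ≠ ⟨(j:ℕ), hj'⟩ := by
          intro h
          apply hij
          apply Fin.ext
          simpa using congrArg Fin.val h
        exact h2 _ _ hne
      · simp only [dif_pos hi', dif_neg hj']
        intro x hx hx'
        simp only [SimpleGraph.Walk.edges_cons, SimpleGraph.Walk.edges_nil,
          List.mem_singleton] at hx'
        subst hx'
        exact (h1 _).2.2 hx
      · simp only [dif_neg hi', dif_pos hj']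
        intro x hx hx'
        simp only [SimpleGraph.Walk.edges_cons, SimpleGraph.Walk.edges_nil,
          List.mem_singleton] at hx
        subst hx
        exact (h1 _).2.2 hx'
      · exfalso
        have hi2 : (i : ℕ) < d := i.isLt
        have hj2 : (j : ℕ) < d := j.isLt
        have : (i : ℕ) = (j : ℕ) := by omega
        exact hij (Fin.ext this)
  · -- v not adjacent to w
    have hwmem : w ∉ G.neighborFinset v := fun h =>
      hadj ((SimpleGraph.mem_neighborFinset _ _ _).1 h)
    have hvmem : v ∉ G.neighborFinset w := fun h =>
      hadj (((SimpleGraph.mem_neighborFinset _ _ _).1 h).symm)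
    have hkA : min (G.degree v) (G.degree w) ≤ A.card := by
      rw [hA, Finset.erase_eq_of_notMem hwmem, SimpleGraph.card_neighborFinset_eq_degree]
      exact min_le_left _ _
    have hkB : min (G.degree v) (G.degree w) ≤ B.card := by
      rw [hB, Finset.erase_eq_of_notMem hvmem, SimpleGraph.card_neighborFinset_eq_degree]
      exact min_le_right _ _
    obtain ⟨P, h1, h2⟩ := master _ hkA hkB
    exact ⟨P, fun i => ⟨(h1 i).1, (h1 i).2.1⟩, h2⟩
end

section
/- Let G be a non-collinear visibility graph. Then the edge-connectivity of G equals its minimum degree. Moreover, for any two distinct vertices v and w of G, there exist min{deg(v), deg(w)} pairwise edge-disjoint paths between v and w in G, each of length at most 4. -/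
/-- Two distinct points of the plane are visible with respect to a finite point set `P`
if no point of `P` lies in the open line segment between them. -/
def VisAdj (P : Finset (ℝ × ℝ)) (x y : ℝ × ℝ) : Prop :=
  x ≠ y ∧ ∀ p ∈ P, p ∉ openSegment ℝ x y

/-- The visibility graph of a finite point set `P` in the plane: vertices are the points
of `P`, two distinct points being adjacent iff the open segment between them contains no
point of `P`. -/
def visibilityGraph (P : Finset (ℝ × ℝ)) : SimpleGraph {p : ℝ × ℝ // p ∈ P} where
  Adj u v := VisAdj P u.1 v.1
  symm := ⟨by
    rintro u v ⟨hne, h⟩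
    refine ⟨hne.symm, fun p hp => ?_⟩
    rw [openSegment_symm]
    exact h p hp⟩
  loopless := ⟨by rintro u ⟨hne, -⟩; exact hne rfl⟩

/-- The minimum degree of a graph: the least number of neighbours of a vertex
(degree measured by `Nat.card` of the neighbour set). -/
noncomputable def minDegree' {V : Type*} (G : SimpleGraph V) : ℕ :=
  sInf {d | ∃ v : V, d = Nat.card (G.neighborSet v)}

/-- The edge-connectivity of a graph: the least size of a set of edges whose removal
disconnects the graph. -/
noncomputable def edgeConn {V : Type*} (G : SimpleGraph V) : ℕ :=
  sInf {k | ∃ F : Set (Sym2 V), F ⊆ G.edgeSet ∧ Nat.card F = k ∧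
    ¬ (G.deleteEdges F).Connected}

/-!
Two points `a ≠ b` of a non-collinear set `P` have a common visible neighbour: a point of `P`
off the line `ab` that is nearest to this line. Hence any two vertices of the visibility graph
have a common neighbour, and in such a graph the paths between `v` and `w` can be written down:
the edge `vw` if present, `v x w` for every common neighbour `x`, and, for the remaining
neighbours `a` of `v` and `b` of `w` paired off, the path `v a b w`, or `v a c b w` through a
common neighbour `c` of `a` and `b`. Choosing the pairing with the most adjacent pairs keeps
these paths edge-disjoint. Such paths between all pairs of vertices bound the edge-connectivity
below by the minimum degree, and the edges at a vertex of minimum degree bound it above.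
-/

/-- Twice the signed area of the triangle `a b p`; it vanishes exactly on the line `ab`. -/
def cross (a b p : ℝ × ℝ) : ℝ :=
  (p.1 - a.1) * (b.2 - a.2) - (p.2 - a.2) * (b.1 - a.1)

lemma cross_lineMap (a b c x : ℝ × ℝ) (t : ℝ) :
    cross a b (AffineMap.lineMap c x t) = (1 - t) * cross a b c + t * cross a b x := by
  simp only [cross, AffineMap.lineMap_apply_module, Prod.fst_add, Prod.snd_add, Prod.smul_fst,
    Prod.smul_snd, smul_eq_mul]
  ring

lemma exists_sub_eq_smul_of_cross_eq_zero {a b p : ℝ × ℝ} (hab : a ≠ b) (h : cross a b p = 0) :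
    ∃ r : ℝ, p - a = r • (b - a) := by
  unfold cross at h
  by_cases h1 : b.1 - a.1 = 0
  · have h2 : b.2 - a.2 ≠ 0 := fun h2 => hab (Prod.ext (by linarith) (by linarith))
    have h3 : p.1 - a.1 = 0 := by
      simpa [h1, h2] using h
    refine ⟨(p.2 - a.2) / (b.2 - a.2), Prod.ext ?_ ?_⟩
    · simp [h1, h3]
    · simp [field]
  · refine ⟨(p.1 - a.1) / (b.1 - a.1), Prod.ext ?_ ?_⟩
    · simp [field]
    · simp only [Prod.snd_sub, Prod.smul_snd, smul_eq_mul]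
      field_simp
      linarith

lemma collinear_of_forall_cross_eq_zero {s : Set (ℝ × ℝ)} {a b : ℝ × ℝ} (ha : a ∈ s)
    (hab : a ≠ b) (h : ∀ p ∈ s, cross a b p = 0) : Collinear ℝ s := by
  refine (collinear_iff_of_mem ha).2 ⟨b - a, fun p hp => ?_⟩
  obtain ⟨r, hr⟩ := exists_sub_eq_smul_of_cross_eq_zero hab (h p hp)
  exact ⟨r, by rw [vadd_eq_add, ← hr, sub_add_cancel]⟩

/-- A point of `P` off the line `ab` that is closest to it sees every point of `P` on that
line: a point of `P` strictly between them would be off the line and strictly closer. -/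
lemma exists_visAdj_visAdj {P : Finset (ℝ × ℝ)} (hP : ¬ Collinear ℝ (P : Set (ℝ × ℝ)))
    {a b : ℝ × ℝ} (ha : a ∈ P) (hab : a ≠ b) :
    ∃ c ∈ P, VisAdj P c a ∧ VisAdj P c b := by
  classical
  set S := P.filter (fun p => cross a b p ≠ 0)
  have hS : S.Nonempty := by
    by_contra hS
    refine hP (collinear_of_forall_cross_eq_zero ha hab fun p hp => ?_)
    by_contra hp'
    exact hS ⟨p, Finset.mem_filter.2 ⟨hp, hp'⟩⟩
  obtain ⟨c, hcS, hmin⟩ := S.exists_min_image (fun p => |cross a b p|) hS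
  obtain ⟨hcP, hc⟩ := Finset.mem_filter.1 hcS
  have hsees : ∀ x, cross a b x = 0 → VisAdj P c x := by
    refine fun x hx => ⟨fun hcx => hc (hcx ▸ hx), fun p hpP hp => ?_⟩
    rw [openSegment_eq_image_lineMap] at hp
    obtain ⟨t, ⟨ht0, ht1⟩, rfl⟩ := hp
    have hcross : cross a b (AffineMap.lineMap c x t) = (1 - t) * cross a b c := by
      rw [cross_lineMap, hx, mul_zero, add_zero]
    have hpS : AffineMap.lineMap c x t ∈ S :=
      Finset.mem_filter.2 ⟨hpP, by rw [hcross]; exact mul_ne_zero (by linarith) hc⟩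
    have := hmin _ hpS
    rw [hcross, abs_mul, abs_of_pos (by linarith : (0 : ℝ) < 1 - t)] at this
    nlinarith [abs_pos.2 hc]
  exact ⟨c, hcP, hsees a (by simp [cross]), hsees b (by simp [cross]; ring)⟩

namespace SimpleGraph

variable {V : Type*} {G : SimpleGraph V}

def HasCommonNeighbors (G : SimpleGraph V) : Prop :=
  ∀ a b, a ≠ b → (G.commonNeighbors a b).Nonempty

def Walk.attachEnds {v p q w : V} (hvp : G.Adj v p) (M : G.Walk p q) (hqw : G.Adj q w) :
    G.Walk v w :=
  .cons hvp (M.concat hqw)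

namespace Walk

variable {v p q w : V}

lemma edges_attachEnds (hvp : G.Adj v p) (M : G.Walk p q) (hqw : G.Adj q w) :
    (attachEnds hvp M hqw).edges = s(v, p) :: (M.edges ++ [s(q, w)]) := by
  simp [attachEnds, edges_concat]

lemma length_attachEnds (hvp : G.Adj v p) (M : G.Walk p q) (hqw : G.Adj q w) :
    (attachEnds hvp M hqw).length = M.length + 2 := by
  simp [attachEnds]

lemma isPath_attachEnds {hvp : G.Adj v p} {M : G.Walk p q} {hqw : G.Adj q w}
    (hM : M.IsPath) (hv : v ∉ M.support) (hw : w ∉ M.support) (hvw : v ≠ w) :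
    (attachEnds hvp M hqw).IsPath :=
  (hM.concat hw hqw).cons (by simp [support_concat, hv, hvw])

lemma notMem_edges_attachEnds {hvp : G.Adj v p} {M : G.Walk p q} {hqw : G.Adj q w}
    (hv : v ∉ M.support) (hw : w ∉ M.support) : s(v, w) ∉ (attachEnds hvp M hqw).edges := by
  have hwp : w ≠ p := fun h => hw (h ▸ M.start_mem_support)
  have hvq : v ≠ q := fun h => hv (h ▸ M.end_mem_support)
  have hvM : s(v, w) ∉ M.edges := fun h => hv (M.fst_mem_support_of_mem_edges h)
  simp only [edges_attachEnds, List.mem_cons, List.mem_append, Sym2.eq_iff]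
  grind

lemma disjoint_edges_attachEnds {p' q' : V} {hvp : G.Adj v p} {M : G.Walk p q}
    {hqw : G.Adj q w} {hvp' : G.Adj v p'} {M' : G.Walk p' q'} {hqw' : G.Adj q' w}
    (hv : v ∉ M.support) (hw : w ∉ M.support) (hv' : v ∉ M'.support) (hw' : w ∉ M'.support)
    (hvw : v ≠ w) (hp : p ≠ p') (hq : q ≠ q') (hM : M.edges.Disjoint M'.edges) :
    (attachEnds hvp M hqw).edges.Disjoint (attachEnds hvp' M' hqw').edges := by
  have hvM : ∀ x, s(v, x) ∉ M.edges := fun x h => hv (M.fst_mem_support_of_mem_edges h)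
  have hvM' : ∀ x, s(v, x) ∉ M'.edges := fun x h => hv' (M'.fst_mem_support_of_mem_edges h)
  have hwM : ∀ x, s(x, w) ∉ M.edges := fun x h => hw (M.snd_mem_support_of_mem_edges h)
  have hwM' : ∀ x, s(x, w) ∉ M'.edges := fun x h => hw' (M'.snd_mem_support_of_mem_edges h)
  have hvq : v ≠ q := fun h => hv (h ▸ M.end_mem_support)
  have hvq' : v ≠ q' := fun h => hv' (h ▸ M'.end_mem_support)
  have hwp : w ≠ p := fun h => hw (h ▸ M.start_mem_support)
  have hwp' : w ≠ p' := fun h => hw' (h ▸ M'.start_mem_support)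
  intro e he he'
  simp only [edges_attachEnds, List.mem_cons, List.mem_append, List.not_mem_nil, or_false]
    at he he'
  rcases he with rfl | he | rfl <;> rcases he' with h | h | h
  all_goals first | exact hM he h | grind

end Walk

namespace HasCommonNeighbors

variable (hG : G.HasCommonNeighbors) {a b : V}

open Classical in
noncomputable def shortWalk (hab : a ≠ b) : G.Walk a b :=
  if h : G.Adj a b then h.toWalk
  else
    have hc := (hG a b hab).some_mem
    .cons ((G.mem_commonNeighbors).1 hc).1 (.cons ((G.mem_commonNeighbors).1 hc).2.symm .nil)

lemma shortWalk_of_adj (hab : a ≠ b) (h : G.Adj a b) : hG.shortWalk hab = h.toWalk := by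
  simp [shortWalk, h]

lemma exists_shortWalk_of_not_adj (hab : a ≠ b) (h : ¬ G.Adj a b) :
    ∃ (c : V) (hac : G.Adj a c) (hcb : G.Adj c b),
      hG.shortWalk hab = .cons hac (.cons hcb .nil) :=
  have hc := (G.mem_commonNeighbors).1 (hG a b hab).some_mem
  ⟨_, hc.1, hc.2.symm, by simp [shortWalk, h]⟩

lemma isPath_shortWalk (hab : a ≠ b) : (hG.shortWalk hab).IsPath := by
  by_cases h : G.Adj a b
  · rw [hG.shortWalk_of_adj hab h]
    exact h.isPath_toWalk
  · obtain ⟨c, hac, hcb, hw⟩ := hG.exists_shortWalk_of_not_adj hab h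
    rw [hw]
    simp [hab, hac.ne, hcb.ne]

lemma length_shortWalk_le (hab : a ≠ b) : (hG.shortWalk hab).length ≤ 2 := by
  by_cases h : G.Adj a b
  · simp [hG.shortWalk_of_adj hab h]
  · obtain ⟨c, hac, hcb, hw⟩ := hG.exists_shortWalk_of_not_adj hab h
    simp [hw]

lemma notMem_support_shortWalk (hab : a ≠ b) {u : V} (hua : u ≠ a) (hub : u ≠ b)
    (hu : u ∉ G.commonNeighbors a b) : u ∉ (hG.shortWalk hab).support := by
  by_cases h : G.Adj a b
  · simp [hG.shortWalk_of_adj hab h, h.support_toWalk, hua, hub]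
  · obtain ⟨c, hac, hcb, hw⟩ := hG.exists_shortWalk_of_not_adj hab h
    have huc : u ≠ c := by rintro rfl; exact hu ⟨hac, hcb.symm⟩
    simp [hw, hua, hub, huc]

lemma disjoint_edges_shortWalk {a' b' : V} (hab : a ≠ b) (hab' : a' ≠ b') (haa' : a ≠ a')
    (hbb' : b ≠ b') (hab₂ : a ≠ b') (hba₂ : b ≠ a')
    (hcross : ¬ G.Adj a b → ¬ G.Adj a' b' → ¬ G.Adj a b' ∧ ¬ G.Adj a' b) :
    (hG.shortWalk hab).edges.Disjoint (hG.shortWalk hab').edges := by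
  intro e he he'
  by_cases h : G.Adj a b <;> by_cases h' : G.Adj a' b'
  · simp only [hG.shortWalk_of_adj hab h, hG.shortWalk_of_adj hab' h', Adj.edges_toWalk,
      List.mem_singleton] at he he'
    grind
  · obtain ⟨c', hac', hcb', hw'⟩ := hG.exists_shortWalk_of_not_adj hab' h'
    simp only [hG.shortWalk_of_adj hab h, hw', Walk.edges_cons, Walk.edges_nil,
      List.mem_cons, List.not_mem_nil, or_false] at he he'
    grind
  · obtain ⟨c, hac, hcb, hw⟩ := hG.exists_shortWalk_of_not_adj hab h
    simp only [hG.shortWalk_of_adj hab' h', hw, Walk.edges_cons, Walk.edges_nil,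
      List.mem_cons, List.not_mem_nil, or_false] at he he'
    grind
  · obtain ⟨c, hac, hcb, hw⟩ := hG.exists_shortWalk_of_not_adj hab h
    obtain ⟨c', hac', hcb', hw'⟩ := hG.exists_shortWalk_of_not_adj hab' h'
    obtain ⟨hnab', hna'b⟩ := hcross h h'
    simp only [hw, hw', Walk.edges_cons, Walk.edges_nil, List.mem_cons, List.not_mem_nil,
      or_false] at he he'
    grind [G.adj_comm]

end HasCommonNeighbors

/-- Among all pairings `i ↦ (a i, b (σ i))`, one with the most adjacent pairs cannot be
improved by swapping two partners, so no non-adjacent pair is adjacent across to another. -/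
lemma exists_perm_not_adj_of_not_adj {ι : Type*} [Fintype ι] [DecidableEq ι] (a b : ι → V) :
    ∃ σ : Equiv.Perm ι, ∀ i j, i ≠ j → ¬ G.Adj (a i) (b (σ i)) → ¬ G.Adj (a j) (b (σ j)) →
      ¬ G.Adj (a i) (b (σ j)) := by
  classical
  let adjPairs (σ : Equiv.Perm ι) := Finset.univ.filter fun i => G.Adj (a i) (b (σ i))
  have mem_adjPairs : ∀ σ i, i ∈ adjPairs σ ↔ G.Adj (a i) (b (σ i)) := by simp [adjPairs]
  obtain ⟨σ, -, hσ⟩ :=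
    Finset.univ.exists_max_image (fun σ => (adjPairs σ).card) Finset.univ_nonempty
  refine ⟨σ, fun i j hij hi hj hij' => ?_⟩
  have hsub : adjPairs σ ⊂ adjPairs (σ * Equiv.swap i j) := by
    refine Finset.ssubset_iff_of_subset (fun x hx => ?_) |>.2 ⟨i, ?_, ?_⟩
    · rw [mem_adjPairs] at hx ⊢
      have hxi : x ≠ i := by rintro rfl; exact hi hx
      have hxj : x ≠ j := by rintro rfl; exact hj hx
      rwa [Equiv.Perm.mul_apply, Equiv.swap_apply_of_ne_of_ne hxi hxj]
    · rwa [mem_adjPairs, Equiv.Perm.mul_apply, Equiv.swap_apply_left]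
    · rwa [mem_adjPairs]
  exact (hσ _ (Finset.mem_univ _)).not_gt (Finset.card_lt_card hsub)

open Finset in
lemma exists_pairing_not_adj_of_not_adj (A B : Finset V) :
    ∃ a b : Fin (min #A #B) → V, a.Injective ∧ b.Injective ∧ (∀ i, a i ∈ A) ∧ (∀ i, b i ∈ B) ∧
      ∀ i j, i ≠ j → ¬ G.Adj (a i) (b i) → ¬ G.Adj (a j) (b j) → ¬ G.Adj (a i) (b j) := by
  obtain ⟨a⟩ : Nonempty (Fin (min #A #B) ↪ A) := Function.Embedding.nonempty_of_card_le (by simp)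
  obtain ⟨b⟩ : Nonempty (Fin (min #A #B) ↪ B) := Function.Embedding.nonempty_of_card_le (by simp)
  obtain ⟨σ, hσ⟩ := exists_perm_not_adj_of_not_adj (G := G) (fun i => (a i : V)) fun i => b i
  exact ⟨fun i => a i, fun i => b (σ i), Subtype.val_injective.comp a.injective,
    Subtype.val_injective.comp (b.injective.comp σ.injective), fun i => (a i).2,
    fun i => (b (σ i)).2, hσ⟩

structure IsEdgeDisjointPathFamily {ι : Type*} {v w : V} (f : ι → G.Walk v w) (ℓ : ℕ) :
    Prop where
  isPath : ∀ i, (f i).IsPath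
  length_le : ∀ i, (f i).length ≤ ℓ
  pairwise_disjoint : Pairwise fun i j => (f i).edges.Disjoint (f j).edges

namespace IsEdgeDisjointPathFamily

variable {ι : Type*} {v w : V} {f : ι → G.Walk v w} {ℓ : ℕ}

lemma exists_fin [Fintype ι] (hf : IsEdgeDisjointPathFamily f ℓ) {n : ℕ}
    (hn : n ≤ Fintype.card ι) : ∃ g : Fin n → G.Walk v w, IsEdgeDisjointPathFamily g ℓ := by
  obtain ⟨e⟩ : Nonempty (Fin n ↪ ι) := Function.Embedding.nonempty_of_card_le (by simpa using hn)
  exact ⟨f ∘ e, fun i => hf.isPath (e i), fun i => hf.length_le (e i),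
    hf.pairwise_disjoint.comp_of_injective e.injective⟩

lemma option_elim (hf : IsEdgeDisjointPathFamily f ℓ) (hℓ : 1 ≤ ℓ) (h : G.Adj v w)
    (hvw : ∀ i, s(v, w) ∉ (f i).edges) :
    IsEdgeDisjointPathFamily (fun o : Option ι => o.elim h.toWalk f) ℓ := by
  refine ⟨?_, ?_, ?_⟩
  · rintro (_ | i)
    exacts [h.isPath_toWalk, hf.isPath i]
  · rintro (_ | i)
    exacts [by simpa using hℓ, hf.length_le i]
  · rintro (_ | i) (_ | j) hij
    · exact absurd rfl hij
    · simpa using hvw j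
    · simpa using hvw i
    · exact hf.pairwise_disjoint (Option.some_injective _ |>.ne_iff.1 hij)

end IsEdgeDisjointPathFamily

lemma isEdgeDisjointPathFamily_attachEnds {ι : Type*} {v w : V} {p q : ι → V}
    {M : ∀ i, G.Walk (p i) (q i)} {ℓ : ℕ} (hvp : ∀ i, G.Adj v (p i)) (hqw : ∀ i, G.Adj (q i) w)
    (hvw : v ≠ w) (hp : p.Injective) (hq : q.Injective) (hv : ∀ i, v ∉ (M i).support)
    (hw : ∀ i, w ∉ (M i).support) (hM : ∀ i, (M i).IsPath) (hℓ : ∀ i, (M i).length ≤ ℓ)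
    (hdisj : Pairwise fun i j => (M i).edges.Disjoint (M j).edges) :
    IsEdgeDisjointPathFamily (fun i => Walk.attachEnds (hvp i) (M i) (hqw i)) (ℓ + 2) where
  isPath i := Walk.isPath_attachEnds (hM i) (hv i) (hw i) hvw
  length_le i := by simpa [Walk.length_attachEnds] using hℓ i
  pairwise_disjoint _ _ hij := Walk.disjoint_edges_attachEnds (hv _) (hw _) (hv _) (hw _) hvw
    (hp.ne hij) (hq.ne hij) (hdisj hij)

section

open Finset

variable [Fintype V] [DecidableEq V] [DecidableRel G.Adj]

variable (G) in
def exclusiveNeighborFinset (v w : V) : Finset V :=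
  (G.neighborFinset v \ G.neighborFinset w).erase w

lemma mem_exclusiveNeighborFinset {v w x : V} :
    x ∈ G.exclusiveNeighborFinset v w ↔ G.Adj v x ∧ ¬ G.Adj w x ∧ x ≠ w := by
  simp only [exclusiveNeighborFinset, mem_erase, mem_sdiff, mem_neighborFinset]
  tauto

lemma card_neighborFinset_eq (v w : V) :
    #(G.neighborFinset v) = #(G.neighborFinset v ∩ G.neighborFinset w) +
      #(G.exclusiveNeighborFinset v w) + if G.Adj v w then 1 else 0 := by
  rw [← Finset.card_inter_add_card_sdiff (G.neighborFinset v) (G.neighborFinset w),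
    exclusiveNeighborFinset, add_assoc]
  split_ifs with h
  · rw [Finset.card_erase_add_one (by simpa using h)]
  · rw [Finset.erase_eq_of_notMem (by simpa using h), add_zero]

lemma min_degree_eq (v w : V) :
    min (G.degree v) (G.degree w) = #(G.neighborFinset v ∩ G.neighborFinset w) +
      min #(G.exclusiveNeighborFinset v w) #(G.exclusiveNeighborFinset w v) +
        if G.Adj v w then 1 else 0 := by
  rw [← card_neighborFinset_eq_degree, ← card_neighborFinset_eq_degree, card_neighborFinset_eq v w,
    card_neighborFinset_eq w v, inter_comm]
  simp only [G.adj_comm w v]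
  omega

lemma HasCommonNeighbors.exists_isEdgeDisjointPathFamily (hG : G.HasCommonNeighbors)
    {v w : V} (hvw : v ≠ w) :
    ∃ f : ↥(G.neighborFinset v ∩ G.neighborFinset w) ⊕
        Fin (min #(G.exclusiveNeighborFinset v w) #(G.exclusiveNeighborFinset w v)) → G.Walk v w,
      IsEdgeDisjointPathFamily f 4 ∧ ∀ i, s(v, w) ∉ (f i).edges := by
  set A := G.exclusiveNeighborFinset v w
  set B := G.exclusiveNeighborFinset w v
  obtain ⟨a, b, ha_inj, hb_inj, haA, hbB, hcross⟩ := exists_pairing_not_adj_of_not_adj (G := G) A B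
  have ha (i) : G.Adj v (a i) ∧ ¬ G.Adj w (a i) ∧ a i ≠ w := mem_exclusiveNeighborFinset.1 (haA i)
  have hb (i) : G.Adj w (b i) ∧ ¬ G.Adj v (b i) ∧ b i ≠ v := mem_exclusiveNeighborFinset.1 (hbB i)
  have hc (x : ↥(G.neighborFinset v ∩ G.neighborFinset w)) : G.Adj v x ∧ G.Adj w x := by
    simpa only [Finset.mem_inter, mem_neighborFinset] using x.2
  have hab (i j) : a i ≠ b j := fun h => (hb j).2.1 (h ▸ (ha i).1)
  let p : ↥(G.neighborFinset v ∩ G.neighborFinset w) ⊕ Fin (min #A #B) → V :=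
    Sum.elim Subtype.val a
  let q : ↥(G.neighborFinset v ∩ G.neighborFinset w) ⊕ Fin (min #A #B) → V :=
    Sum.elim Subtype.val b
  let M : ∀ i, G.Walk (p i) (q i)
    | .inl _ => .nil
    | .inr i => hG.shortWalk (hab i i)
  have hp : p.Injective :=
    Subtype.val_injective.sumElim ha_inj fun x i h => (ha i).2.1 (h ▸ (hc x).2)
  have hq : q.Injective :=
    Subtype.val_injective.sumElim hb_inj fun x i h => (hb i).2.1 (h ▸ (hc x).1)
  have hv : ∀ i, v ∉ (M i).support
    | .inl x => fun h => (hc x).1.ne (List.mem_singleton.1 h)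
    | .inr i => hG.notMem_support_shortWalk _ (ha i).1.ne (hb i).2.2.symm
        fun h => (hb i).2.1 (G.mem_commonNeighbors.1 h).2.symm
  have hw : ∀ i, w ∉ (M i).support
    | .inl x => fun h => (hc x).2.ne (List.mem_singleton.1 h)
    | .inr i => hG.notMem_support_shortWalk _ (ha i).2.2.symm (hb i).1.ne
        fun h => (ha i).2.1 (G.mem_commonNeighbors.1 h).1.symm
  have hdisj : Pairwise fun i j => (M i).edges.Disjoint (M j).edges := by
    rintro (x | i) (y | j) hij
    · exact List.disjoint_nil_left _
    · exact List.disjoint_nil_left _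
    · exact List.disjoint_nil_right _
    · have hij : i ≠ j := fun h => hij (h ▸ rfl)
      exact hG.disjoint_edges_shortWalk _ _ (ha_inj.ne hij) (hb_inj.ne hij) (hab i j)
        (hab j i).symm fun h h' => ⟨hcross i j hij h h', hcross j i hij.symm h' h⟩
  refine ⟨_, isEdgeDisjointPathFamily_attachEnds (M := M) (ℓ := 2)
    (Sum.rec (fun x => (hc x).1) fun i => (ha i).1)
    (Sum.rec (fun x => (hc x).2.symm) fun i => (hb i).1.symm) hvw hp hq hv hw ?_ ?_ hdisj,
    fun i => Walk.notMem_edges_attachEnds (hv i) (hw i)⟩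
  · rintro (x | i)
    exacts [Walk.IsPath.nil, hG.isPath_shortWalk _]
  · rintro (x | i)
    exacts [Nat.zero_le _, hG.length_shortWalk_le _]

end

theorem HasCommonNeighbors.exists_isEdgeDisjointPathFamily_fin [Finite V]
    (hG : G.HasCommonNeighbors) {v w : V} (hvw : v ≠ w) :
    ∃ f : Fin (min (Nat.card (G.neighborSet v)) (Nat.card (G.neighborSet w))) → G.Walk v w,
      IsEdgeDisjointPathFamily f 4 := by
  classical
  have := Fintype.ofFinite V
  obtain ⟨f, hf, hvw'⟩ := hG.exists_isEdgeDisjointPathFamily hvw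
  have hcard := min_degree_eq (G := G) v w
  simp only [← card_neighborSet_eq_degree, ← Nat.card_eq_fintype_card] at hcard
  by_cases h : G.Adj v w
  · refine (hf.option_elim (by norm_num) h hvw').exists_fin (le_of_eq ?_)
    rw [hcard, if_pos h, Fintype.card_option, Fintype.card_sum, Fintype.card_coe,
      Fintype.card_fin]
  · refine hf.exists_fin (le_of_eq ?_)
    rw [hcard, if_neg h, Fintype.card_sum, Fintype.card_coe, Fintype.card_fin, add_zero]

lemma reachable_deleteEdges_of_card_lt {ι : Type*} {u u' : V} {f : ι → G.Walk u u'}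
    (hf : Pairwise fun i j => (f i).edges.Disjoint (f j).edges) {F : Set (Sym2 V)}
    (hF : F.Finite) (hcard : Nat.card F < Nat.card ι) : (G.deleteEdges F).Reachable u u' := by
  by_contra hnot
  have hmeet (i : ι) : ∃ e ∈ (f i).edges, e ∈ F := by
    by_contra! h
    exact hnot ((f i).toDeleteEdges F h).reachable
  choose e he heF using hmeet
  have : Finite F := hF.to_subtype
  have hinj : (fun i => (⟨e i, heF i⟩ : F)).Injective := fun i j hij => by
    by_contra hne
    have hij : e i = e j := congrArg Subtype.val hij
    exact hf hne (he i) (hij ▸ he j)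
  exact hcard.not_ge (Nat.card_le_card_of_injective _ hinj)

end SimpleGraph

open SimpleGraph

variable {V : Type*}

lemma minDegree'_le (G : SimpleGraph V) (v : V) : minDegree' G ≤ Nat.card (G.neighborSet v) :=
  Nat.sInf_le ⟨v, rfl⟩

lemma exists_not_connected_deleteEdges_card_eq_minDegree' [Nontrivial V] (G : SimpleGraph V) :
    ∃ F ⊆ G.edgeSet, Nat.card F = minDegree' G ∧ ¬ (G.deleteEdges F).Connected := by
  classical
  obtain ⟨v, hv⟩ := Nat.sInf_mem (s := {d | ∃ v : V, d = Nat.card (G.neighborSet v)})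
    ⟨_, Classical.arbitrary V, rfl⟩
  refine ⟨G.incidenceSet v, G.incidenceSet_subset v, ?_, fun hconn => ?_⟩
  · rw [Nat.card_congr (G.incidenceSetEquivNeighborSet v)]
    exact hv.symm
  · obtain ⟨u, hu⟩ := exists_ne v
    obtain ⟨_ | ⟨h, _⟩⟩ := hconn.preconnected v u
    · exact hu rfl
    · rw [deleteEdges_adj] at h
      exact h.2 (G.mk'_mem_incidenceSet_left_iff.2 h.1)

theorem edgeConn_eq_minDegree' [Finite V] [Nontrivial V] {G : SimpleGraph V}
    (h : ∀ u u', u ≠ u' → ∃ f : Fin (minDegree' G) → G.Walk u u',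
      Pairwise fun i j => (f i).edges.Disjoint (f j).edges) :
    edgeConn G = minDegree' G := by
  obtain ⟨F₀, hF₀⟩ := exists_not_connected_deleteEdges_card_eq_minDegree' G
  refine le_antisymm (Nat.sInf_le ⟨F₀, hF₀⟩) (le_csInf ⟨_, F₀, hF₀⟩ ?_)
  rintro _ ⟨F, -, rfl, hF⟩
  by_contra! hlt
  refine hF (connected_iff _ |>.2 ⟨fun u u' => ?_, inferInstance⟩)
  rcases eq_or_ne u u' with rfl | hne
  · rfl
  · obtain ⟨f, hf⟩ := h u u' hne
    exact reachable_deleteEdges_of_card_lt hf (Set.toFinite F) (by simpa using hlt)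

lemma hasCommonNeighbors_visibilityGraph {P : Finset (ℝ × ℝ)}
    (hP : ¬ Collinear ℝ (P : Set (ℝ × ℝ))) : (visibilityGraph P).HasCommonNeighbors := by
  intro a b hab
  obtain ⟨c, hcP, hca, hcb⟩ := exists_visAdj_visAdj hP a.2 (Subtype.coe_ne_coe.2 hab)
  exact ⟨⟨c, hcP⟩, (show (visibilityGraph P).Adj ⟨c, hcP⟩ a from hca).symm,
    (show (visibilityGraph P).Adj ⟨c, hcP⟩ b from hcb).symm⟩

lemma nontrivial_of_not_collinear {P : Finset (ℝ × ℝ)} (hP : ¬ Collinear ℝ (P : Set (ℝ × ℝ))) :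
    Nontrivial P := by
  by_contra h
  rw [not_nontrivial_iff_subsingleton] at h
  rcases ((Set.subsingleton_coe (P : Set (ℝ × ℝ))).1 h).eq_empty_or_singleton with h | ⟨x, h⟩
  · exact hP (h ▸ collinear_empty ℝ _)
  · exact hP (h ▸ collinear_singleton ℝ x)

/-- Let `G` be a non-collinear visibility graph. Then the edge-connectivity of `G` equals
its minimum degree; moreover for any two distinct vertices `v, w` there exist
`min (deg v) (deg w)` pairwise edge-disjoint paths between `v` and `w`, each of length
at most 4. -/
theorem visibility_edgeConnectivity_eq_minDegree
    (P : Finset (ℝ × ℝ)) (hP : ¬ Collinear ℝ (P : Set (ℝ × ℝ))) :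
    edgeConn (visibilityGraph P) = minDegree' (visibilityGraph P) ∧
    ∀ v w : {p : ℝ × ℝ // p ∈ P}, v ≠ w →
      ∃ f : Fin (min (Nat.card ((visibilityGraph P).neighborSet v))
                     (Nat.card ((visibilityGraph P).neighborSet w))) →
              (visibilityGraph P).Walk v w,
        (∀ i, (f i).IsPath ∧ (f i).length ≤ 4) ∧
        ∀ i j, i ≠ j → List.Disjoint (f i).edges (f j).edges := by
  have hG := hasCommonNeighbors_visibilityGraph hP
  have := nontrivial_of_not_collinear hP
  refine ⟨edgeConn_eq_minDegree' fun u u' huu' => ?_, fun v w hvw => ?_⟩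
  · obtain ⟨f, hf⟩ := hG.exists_isEdgeDisjointPathFamily_fin huu'
    obtain ⟨g, hg⟩ := hf.exists_fin
      ((le_min (minDegree'_le _ u) (minDegree'_le _ u')).trans_eq (Fintype.card_fin _).symm)
    exact ⟨g, hg.pairwise_disjoint⟩
  · obtain ⟨f, hf⟩ := hG.exists_isEdgeDisjointPathFamily_fin hvw
    exact ⟨f, fun i => ⟨hf.isPath i, hf.length_le i⟩, fun i j hij => hf.pairwise_disjoint hij⟩
end

section
/- Let G be a finite simple graph with diameter at most 2 and minimum degree δ ≥ 2. Then G has an edge cut of size δ that is not the set of all edges incident to a single vertex if and only if the vertex set of G can be partitioned into three sets A, B, C such that: the induced subgraph G[A] is a complete graph on δ vertices and |B ∪ C| ≥ δ; each vertex in A has exactly one neighbour in B and no neighbours in C; each vertex in B has at least one neighbour in A; and each vertex in B is adjacent to each vertex in C. -/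
/-!
Write `δ` for the minimum degree and `∂S` for the set of edges leaving a vertex set `S`.
Summing degrees over `S` gives `δ |S| ≤ |S| (|S| - 1) + |∂S|`, so a set with `|∂S| ≤ δ` is a
single vertex or has at least `δ` vertices. If deleting the `δ` edges of `F` disconnects `G`, the
component `S` of `G - F` has `∂S ⊆ F`; as `F` is not a vertex star, neither `S` nor `Sᶜ` is a
single vertex. By diameter two one of the sides, say `S`, has every vertex joined to the other
side; then `|S| ≤ |∂S| ≤ δ` forces `|S| = δ`, exactly one outside neighbour for each vertex of `S`,
and `S` a clique. Let `B` be the outside neighbours of `S` and `C` the rest: a common neighbour of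
`a ∈ S` and `c ∈ C` lies outside `S`, so it is the unique outside neighbour of `a`, and `B` is
complete to `C`. Conversely `∂A` is a cut of size `|A| = δ`, and it is not a vertex star because
both `A` and `B ∪ C` have at least two vertices.
-/

open Finset

namespace SimpleGraph

variable {V : Type*} {G : SimpleGraph V}

theorem exists_adj_adj_of_dist_le_two {u v : V} (huv : G.Reachable u v) (hdist : G.dist u v ≤ 2)
    (hne : u ≠ v) (hnadj : ¬ G.Adj u v) : ∃ w, G.Adj u w ∧ G.Adj w v := by
  have h0 : G.dist u v ≠ 0 := fun h ↦ hne (huv.dist_eq_zero_iff.1 h)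
  have h1 : G.dist u v ≠ 1 := fun h ↦ hnadj (dist_eq_one_iff_adj.1 h)
  have hedist : G.edist u v = 2 := by
    rw [← huv.coe_dist_eq_edist, show G.dist u v = 2 by omega]
    rfl
  obtain ⟨w, hw⟩ := (edist_eq_two_iff.1 hedist).2.2
  rw [mem_commonNeighbors] at hw
  exact ⟨w, hw.1, hw.2.symm⟩

theorem forall_exists_adj_of_dist_le_two (hconn : G.Connected) (hdiam : ∀ u v, G.dist u v ≤ 2)
    {s : Finset V} {u : V} (hu : u ∈ s) (hu' : ∀ w ∉ s, ¬ G.Adj u w) :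
    ∀ v ∉ s, ∃ w ∈ s, G.Adj v w := by
  intro v hv
  obtain ⟨w, huw, hwv⟩ := exists_adj_adj_of_dist_le_two (hconn u v) (hdiam u v)
    (ne_of_mem_of_not_mem hu hv) (hu' v hv)
  by_contra! h
  exact hu' w (fun hw ↦ h w hw hwv.symm) huw

variable [DecidableEq V] [DecidableRel G.Adj] {s : Finset V}

theorem card_filter_adj_le_card_sub_one {v : V} (hv : v ∈ s) :
    #{w ∈ s | G.Adj v w} ≤ #s - 1 := by
  rw [← card_erase_of_mem hv]
  refine card_le_card fun w hw ↦ ?_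
  rw [mem_filter] at hw
  exact mem_erase.2 ⟨(G.ne_of_adj hw.2).symm, hw.1⟩

variable [Fintype V] {F : Finset (Sym2 V)}

variable (G) in
def edgeBoundary (s : Finset V) : Finset (Sym2 V) := (G.interedges s sᶜ).image fun e ↦ s(e.1, e.2)

theorem mk_mem_edgeBoundary {x y : V} :
    s(x, y) ∈ G.edgeBoundary s ↔ G.Adj x y ∧ Xor (x ∈ s) (y ∈ s) := by
  simp only [edgeBoundary, mem_image, Prod.exists, Sym2.eq_iff, mk_mem_interedges_iff,
    mem_compl, Xor]
  constructor
  · rintro ⟨a, b, ⟨ha, hb, hab⟩, ⟨rfl, rfl⟩ | ⟨rfl, rfl⟩⟩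
    · exact ⟨hab, .inl ⟨ha, hb⟩⟩
    · exact ⟨hab.symm, .inr ⟨ha, hb⟩⟩
  · rintro ⟨hxy, ⟨hx, hy⟩ | ⟨hy, hx⟩⟩
    · exact ⟨x, y, ⟨hx, hy, hxy⟩, .inl ⟨rfl, rfl⟩⟩
    · exact ⟨y, x, ⟨hy, hx, hxy.symm⟩, .inr ⟨rfl, rfl⟩⟩

theorem edgeBoundary_compl : G.edgeBoundary sᶜ = G.edgeBoundary s := by
  ext e
  induction e using Sym2.ind with
  | _ x y => simp only [mk_mem_edgeBoundary, mem_compl, Xor]; tauto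

theorem edgeBoundary_subset_edgeSet : (G.edgeBoundary s : Set (Sym2 V)) ⊆ G.edgeSet := by
  intro e he
  induction e using Sym2.ind with
  | _ x y => exact (mk_mem_edgeBoundary.1 he).1

theorem card_edgeBoundary : #(G.edgeBoundary s) = ∑ v ∈ s, #{w ∈ sᶜ | G.Adj v w} := by
  rw [edgeBoundary, card_image_of_injOn, interedges_def, card_filter, sum_product]
  · simp only [card_filter]
  rintro ⟨a, b⟩ hab ⟨c, d⟩ hcd h
  simp only [mem_coe, mk_mem_interedges_iff, mem_compl] at hab hcd
  rcases Sym2.eq_iff.1 h with ⟨rfl, rfl⟩ | ⟨rfl, rfl⟩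
  · rfl
  · exact absurd hab.1 hcd.2.1

theorem degree_eq_card_filter_add_card_filter_compl (s : Finset V) (v : V) :
    G.degree v = #{w ∈ s | G.Adj v w} + #{w ∈ sᶜ | G.Adj v w} := by
  rw [← card_neighborFinset_eq_degree, neighborFinset_eq_filter,
    ← card_filter_add_card_filter_not (p := (· ∈ s))]
  simp only [filter_filter]
  congr 2 <;> ext <;> simp [and_comm]

theorem not_connected_deleteEdges_edgeBoundary (hs : s.Nonempty) (hsc : sᶜ.Nonempty) :
    ¬ (G.deleteEdges (G.edgeBoundary s)).Connected := by
  obtain ⟨u, hu⟩ := hs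
  obtain ⟨v, hv⟩ := hsc
  intro hconn
  obtain ⟨p⟩ := hconn u v
  obtain ⟨d, -, hd, hd'⟩ := p.exists_boundary_dart s hu (by simpa using hv)
  have hadj := d.adj
  rw [deleteEdges_adj] at hadj
  exact hadj.2 (mk_mem_edgeBoundary.2 ⟨hadj.1, .inl ⟨hd, hd'⟩⟩)

theorem exists_edgeBoundary_subset_of_not_connected_deleteEdges [Nonempty V]
    (h : ¬ (G.deleteEdges F).Connected) :
    ∃ s : Finset V, s.Nonempty ∧ sᶜ.Nonempty ∧ G.edgeBoundary s ⊆ F := by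
  obtain ⟨u, v, huv⟩ : ∃ u v, ¬ (G.deleteEdges F).Reachable u v := by
    simpa [Preconnected] using fun hpre ↦ h ⟨hpre⟩
  classical
  refine ⟨({w | (G.deleteEdges F).Reachable u w} : Finset V), ⟨u, by simp⟩,
    ⟨v, by simpa using huv⟩, fun e he ↦ ?_⟩
  induction e using Sym2.ind with
  | _ x y =>
    by_contra heF
    obtain ⟨hxy, hxor⟩ := mk_mem_edgeBoundary.1 he
    have hadj : (G.deleteEdges F).Adj x y := by simp [hxy, heF]
    simp only [mem_filter, mem_univ, true_and] at hxor
    rcases hxor with ⟨hx, hy⟩ | ⟨hy, hx⟩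
    · exact hy (hx.trans hadj.reachable)
    · exact hx (hy.trans hadj.symm.reachable)

theorem minDegree_mul_card_le (s : Finset V) :
    G.minDegree * #s ≤ #s * (#s - 1) + #(G.edgeBoundary s) := calc
  G.minDegree * #s = ∑ _v ∈ s, G.minDegree := by rw [sum_const, smul_eq_mul, mul_comm]
  _ ≤ ∑ v ∈ s, G.degree v := sum_le_sum fun v _ ↦ G.minDegree_le_degree v
  _ = ∑ v ∈ s, #{w ∈ s | G.Adj v w} + #(G.edgeBoundary s) := by
    simp only [card_edgeBoundary, ← sum_add_distrib,
      ← degree_eq_card_filter_add_card_filter_compl]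
  _ ≤ #s * (#s - 1) + #(G.edgeBoundary s) := by
    grw [sum_le_sum fun v hv ↦ card_filter_adj_le_card_sub_one (G := G) hv, sum_const,
      smul_eq_mul]

theorem minDegree_le_card_of_card_edgeBoundary_le (hs : 1 < #s)
    (h : #(G.edgeBoundary s) ≤ G.minDegree) : G.minDegree ≤ #s := by
  have hsum := minDegree_mul_card_le (G := G) s
  obtain ⟨m, hm⟩ : ∃ m, #s = m + 2 := ⟨#s - 2, by omega⟩
  rw [hm] at hsum ⊢
  have : G.minDegree * (m + 1) ≤ (m + 2) * (m + 1) := by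
    rw [show m + 2 - 1 = m + 1 by omega] at hsum
    linarith
  exact Nat.le_of_mul_le_mul_right this m.succ_pos

theorem card_le_card_edgeBoundary (hout : ∀ v ∈ s, ∃ w ∉ s, G.Adj v w) :
    #s ≤ #(G.edgeBoundary s) := by
  rw [card_edgeBoundary, card_eq_sum_ones]
  refine sum_le_sum fun v hv ↦ card_pos.2 ?_
  obtain ⟨w, hw, hvw⟩ := hout v hv
  exact ⟨w, mem_filter.2 ⟨mem_compl.2 hw, hvw⟩⟩

theorem card_filter_compl_adj_eq_one (h : #(G.edgeBoundary s) ≤ #s)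
    (hout : ∀ v ∈ s, ∃ w ∉ s, G.Adj v w) : ∀ v ∈ s, #{w ∈ sᶜ | G.Adj v w} = 1 := by
  have hone : ∀ v ∈ s, 1 ≤ #{w ∈ sᶜ | G.Adj v w} := fun v hv ↦ by
    obtain ⟨w, hw, hvw⟩ := hout v hv
    exact card_pos.2 ⟨w, mem_filter.2 ⟨mem_compl.2 hw, hvw⟩⟩
  have heq := (sum_eq_sum_iff_of_le hone).1 <| by
    rw [← card_eq_sum_ones, ← card_edgeBoundary]
    exact le_antisymm (card_le_card_edgeBoundary hout) h
  exact fun v hv ↦ (heq v hv).symm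

theorem pairwise_adj_of_card_le_minDegree (hs : #s ≤ G.minDegree)
    (hout : ∀ v ∈ s, #{w ∈ sᶜ | G.Adj v w} ≤ 1) : (s : Set V).Pairwise G.Adj := by
  intro v hv w hw hvw
  have hsub : {w ∈ s | G.Adj v w} ⊆ s.erase v := fun w hw ↦ by
    rw [mem_filter] at hw
    exact mem_erase.2 ⟨(G.ne_of_adj hw.2).symm, hw.1⟩
  have hcard : #(s.erase v) ≤ #{w ∈ s | G.Adj v w} := by
    have hdeg := G.minDegree_le_degree v
    rw [degree_eq_card_filter_add_card_filter_compl s] at hdeg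
    have := hout v hv
    rw [card_erase_of_mem hv]
    omega
  have hw' : w ∈ {w ∈ s | G.Adj v w} :=
    eq_of_subset_of_card_le hsub hcard ▸ mem_erase.2 ⟨hvw.symm, hw⟩
  exact (mem_filter.1 hw').2

theorem one_lt_card_of_edgeBoundary_subset (hs : s.Nonempty) (hsF : G.edgeBoundary s ⊆ F)
    (hF : #F ≤ G.minDegree) (hstar : ¬ ∃ v, (F : Set (Sym2 V)) = G.incidenceSet v) :
    1 < #s := by
  by_contra! h
  obtain ⟨v, rfl⟩ := card_eq_one.1 (le_antisymm h hs.card_pos)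
  have hsub : G.incidenceFinset v ⊆ F := fun e he ↦ by
    rw [mem_incidenceFinset] at he
    obtain ⟨w, rfl⟩ := Sym2.mem_iff_exists.1 he.2
    have hvw : G.Adj v w := he.1
    exact hsF (mk_mem_edgeBoundary.2 ⟨hvw, .inl ⟨mem_singleton_self v, by simpa using hvw.ne'⟩⟩)
  have := eq_of_subset_of_card_le hsub <| by
    rw [card_incidenceFinset_eq_degree]
    exact hF.trans (G.minDegree_le_degree v)
  exact hstar ⟨v, by rw [← this, coe_incidenceFinset]⟩

theorem exists_partition_of_card_eq_minDegree (hconn : G.Connected)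
    (hdiam : ∀ u v, G.dist u v ≤ 2) (hs : #s = G.minDegree)
    (hclique : (s : Set V).Pairwise G.Adj) (hout : ∀ v ∈ s, #{w ∈ sᶜ | G.Adj v w} = 1)
    (hsc : G.minDegree ≤ #sᶜ) :
    ∃ A B C : Set V,
        A ∪ B ∪ C = Set.univ ∧ Disjoint A B ∧ Disjoint A C ∧ Disjoint B C ∧
        Nat.card A = G.minDegree ∧ A.Pairwise G.Adj ∧
        G.minDegree ≤ Nat.card ((B ∪ C : Set V)) ∧
        (∀ a ∈ A, (∃! b, b ∈ B ∧ G.Adj a b) ∧ ∀ c ∈ C, ¬ G.Adj a c) ∧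
        (∀ b ∈ B, ∃ a ∈ A, G.Adj a b) ∧
        (∀ b ∈ B, ∀ c ∈ C, G.Adj b c) := by
  have huniq : ∀ v ∈ s, ∃! w, w ∉ s ∧ G.Adj v w := fun v hv ↦ by
    simpa [card_eq_one_iff_existsUnique] using hout v hv
  set B : Set V := {w | w ∉ s ∧ ∃ a ∈ s, G.Adj a w}
  set C : Set V := ↑sᶜ \ B
  have hBC : B ∪ C = ↑sᶜ := Set.union_sdiff_cancel fun w hw ↦ by simpa using hw.1
  refine ⟨s, B, C, ?_, ?_, ?_, Set.disjoint_sdiff_right, by simpa using hs, hclique, ?_,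
    fun a ha ↦ ⟨?_, fun c hc hac ↦ hc.2 ⟨by simpa using hc.1, a, ha, hac⟩⟩, fun b hb ↦ hb.2, ?_⟩
  · rw [Set.union_assoc, hBC, coe_compl, Set.union_compl_self]
  · exact Set.disjoint_left.2 fun w hw hw' ↦ hw'.1 hw
  · exact Set.disjoint_left.2 fun w hw hw' ↦ mem_compl.1 hw'.1 hw
  · rwa [hBC, Nat.card_coe_set_eq, Set.ncard_coe_finset]
  · obtain ⟨b, ⟨hb, hab⟩, hbu⟩ := huniq a ha
    exact ⟨b, ⟨⟨hb, a, ha, hab⟩, hab⟩, fun w hw ↦ hbu w ⟨hw.1.1, hw.2⟩⟩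
  · rintro b ⟨hb, a, ha, hab⟩ c ⟨hc, hcB⟩
    rw [mem_coe, mem_compl] at hc
    obtain ⟨w, haw, hwc⟩ := exists_adj_adj_of_dist_le_two (hconn a c) (hdiam a c)
      (ne_of_mem_of_not_mem ha hc) fun hac ↦ hcB ⟨hc, a, ha, hac⟩
    have hw : w ∉ s := fun hw ↦ hcB ⟨hc, w, hw, hwc⟩
    obtain ⟨_, -, hbu⟩ := huniq a ha
    exact (hbu w ⟨hw, haw⟩).trans (hbu b ⟨hb, hab⟩).symm ▸ hwc

theorem exists_partition_of_not_connected_deleteEdges [Nonempty V] (hconn : G.Connected)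
    (hdiam : ∀ u v, G.dist u v ≤ 2) (hF : #F = G.minDegree)
    (hdisc : ¬ (G.deleteEdges F).Connected)
    (hstar : ¬ ∃ v, (F : Set (Sym2 V)) = G.incidenceSet v) :
    ∃ A B C : Set V,
        A ∪ B ∪ C = Set.univ ∧ Disjoint A B ∧ Disjoint A C ∧ Disjoint B C ∧
        Nat.card A = G.minDegree ∧ A.Pairwise G.Adj ∧
        G.minDegree ≤ Nat.card ((B ∪ C : Set V)) ∧
        (∀ a ∈ A, (∃! b, b ∈ B ∧ G.Adj a b) ∧ ∀ c ∈ C, ¬ G.Adj a c) ∧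
        (∀ b ∈ B, ∃ a ∈ A, G.Adj a b) ∧
        (∀ b ∈ B, ∀ c ∈ C, G.Adj b c) := by
  obtain ⟨s, hs, hsc, hsF⟩ := exists_edgeBoundary_subset_of_not_connected_deleteEdges hdisc
  -- If some vertex of `s` has no neighbour outside `s`, then by diameter two every vertex of
  -- `sᶜ` has one in `s`, so `sᶜ` will do.
  wlog hout : ∀ v ∈ s, ∃ w ∉ s, G.Adj v w generalizing s
  · push Not at hout
    obtain ⟨u, hu, hu'⟩ := hout
    refine this sᶜ hsc (by rwa [compl_compl]) (by rwa [edgeBoundary_compl]) fun v hv ↦ ?_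
    simpa using forall_exists_adj_of_dist_le_two hconn hdiam hu hu' v (mem_compl.1 hv)
  have hcut : #(G.edgeBoundary s) ≤ G.minDegree := hF ▸ card_le_card hsF
  have hcard : #s = G.minDegree :=
    le_antisymm ((card_le_card_edgeBoundary hout).trans hcut)
      (minDegree_le_card_of_card_edgeBoundary_le
        (one_lt_card_of_edgeBoundary_subset hs hsF hF.le hstar) hcut)
  have hout1 := card_filter_compl_adj_eq_one (hcut.trans hcard.ge) hout
  refine exists_partition_of_card_eq_minDegree hconn hdiam hcard
    (pairwise_adj_of_card_le_minDegree hcard.le fun v hv ↦ (hout1 v hv).le) hout1 ?_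
  rw [← edgeBoundary_compl] at hsF hcut
  exact minDegree_le_card_of_card_edgeBoundary_le
    (one_lt_card_of_edgeBoundary_subset hsc hsF hF.le hstar) hcut

theorem card_edgeBoundary_eq_card (h : ∀ v ∈ s, ∃! w, w ∉ s ∧ G.Adj v w) :
    #(G.edgeBoundary s) = #s := by
  rw [card_edgeBoundary, card_eq_sum_ones]
  exact sum_congr rfl fun v hv ↦ by simpa [card_eq_one_iff_existsUnique] using h v hv

theorem edgeBoundary_ne_incidenceSet {A : Finset V} {B C : Set V} (hAB : Disjoint (A : Set V) B)
    (hAC : Disjoint (A : Set V) C) (hA : 1 < #A) (hclique : (A : Set V).Pairwise G.Adj)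
    (hBCcard : 1 < (B ∪ C).ncard) (hAadj : ∀ a ∈ A, ∃ b ∈ B, G.Adj a b)
    (hBadj : ∀ b ∈ B, ∃ a ∈ A, G.Adj a b) (hBCadj : ∀ b ∈ B, ∀ c ∈ C, G.Adj b c) (v : V) :
    (G.edgeBoundary A : Set (Sym2 V)) ≠ G.incidenceSet v := by
  intro hv
  have key : ∀ x y, G.Adj x y → (Xor (x ∈ A) (y ∈ A) ↔ v = x ∨ v = y) := fun x y hxy ↦ by
    have := congrArg (s(x, y) ∈ ·) hv
    simpa [mk_mem_edgeBoundary, incidenceSet, hxy] using this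
  by_cases hvA : v ∈ A
  · obtain ⟨a, ha, hav⟩ := exists_mem_ne hA v
    have := (key v a (hclique hvA ha hav.symm)).2 (.inl rfl)
    simp [hvA, ha] at this
  obtain ⟨a, ha⟩ := card_pos.1 (by omega : 0 < #A)
  obtain ⟨b, hb, hab⟩ := hAadj a ha
  have hbA : b ∉ A := fun h ↦ Set.disjoint_left.1 hAB h hb
  obtain rfl | rfl := (key a b hab).1 (.inl ⟨ha, hbA⟩)
  · exact hvA ha
  obtain ⟨x, hx, hxv⟩ := Set.exists_ne_of_one_lt_ncard hBCcard v
  have hxA : x ∉ A := fun h ↦ Set.disjoint_left.1 (Set.disjoint_union_right.2 ⟨hAB, hAC⟩) h hx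
  rcases hx with hx | hx
  · obtain ⟨a', ha', ha'x⟩ := hBadj x hx
    obtain rfl | rfl := (key a' x ha'x).1 (.inl ⟨ha', hxA⟩)
    · exact hvA ha'
    · exact hxv rfl
  · have := (key v x (hBCadj v hb x hx)).2 (.inl rfl)
    simp [hvA, hxA] at this

theorem exists_edgeCut_of_partition {A : Finset V} {B C : Set V}
    (hcover : (A : Set V) ∪ B ∪ C = Set.univ) (hAB : Disjoint (A : Set V) B)
    (hAC : Disjoint (A : Set V) C)
    (hcardA : #A = G.minDegree) (hclique : (A : Set V).Pairwise G.Adj)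
    (hcardBC : G.minDegree ≤ Nat.card ((B ∪ C : Set V)))
    (hA : ∀ a ∈ A, (∃! b, b ∈ B ∧ G.Adj a b) ∧ ∀ c ∈ C, ¬ G.Adj a c)
    (hBadj : ∀ b ∈ B, ∃ a ∈ A, G.Adj a b) (hBCadj : ∀ b ∈ B, ∀ c ∈ C, G.Adj b c)
    (hδ : 2 ≤ G.minDegree) :
    ∃ F : Finset (Sym2 V), (F : Set (Sym2 V)) ⊆ G.edgeSet ∧ F.card = G.minDegree ∧
        ¬ (G.deleteEdges (F : Set (Sym2 V))).Connected ∧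
        ¬ ∃ v : V, (F : Set (Sym2 V)) = G.incidenceSet v := by
  have hBCA : B ∪ C ⊆ (A : Set V)ᶜ :=
    Set.union_subset hAB.subset_compl_left hAC.subset_compl_left
  have hout : ∀ a ∈ A, ∃! w, w ∉ A ∧ G.Adj a w := by
    intro a ha
    obtain ⟨⟨b, ⟨hb, hab⟩, hbu⟩, hC⟩ := hA a ha
    refine ⟨b, ⟨hBCA (.inl hb), hab⟩, fun w ⟨hw, haw⟩ ↦ hbu w ⟨?_, haw⟩⟩
    obtain (h | h) | h : w ∈ (A : Set V) ∪ B ∪ C := hcover ▸ Set.mem_univ w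
    · exact absurd h hw
    · exact h
    · exact absurd haw (hC w h)
  rw [Nat.card_coe_set_eq] at hcardBC
  obtain ⟨x, hx⟩ := Set.nonempty_of_ncard_ne_zero (by omega : (B ∪ C).ncard ≠ 0)
  refine ⟨G.edgeBoundary A, edgeBoundary_subset_edgeSet,
    (card_edgeBoundary_eq_card hout).trans hcardA,
    not_connected_deleteEdges_edgeBoundary (card_pos.1 (by omega)) ⟨x, by simpa using hBCA hx⟩,
    fun ⟨v, hv⟩ ↦ edgeBoundary_ne_incidenceSet hAB hAC (by omega) hclique (by omega)
      (fun a ha ↦ (hA a ha).1.exists.imp fun _ ↦ id) hBadj hBCadj v hv⟩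

end SimpleGraph

open SimpleGraph

/-- Let `G` be a finite simple graph with diameter at most 2 and minimum degree `δ ≥ 2`.
Then `G` has an edge cut of size `δ` that is not the set of all edges incident to a
single vertex if and only if `V(G)` can be partitioned into sets `A`, `B`, `C` such that:
`G[A]` is a complete graph on `δ` vertices and `|B ∪ C| ≥ δ`; each vertex of `A` has
exactly one neighbour in `B` and no neighbour in `C`; each vertex of `B` has a neighbour
in `A`; and every vertex of `B` is adjacent to every vertex of `C`. -/
theorem delta_edge_cut_characterisation
    {V : Type*} [Fintype V] [Nonempty V] (G : SimpleGraph V) [DecidableRel G.Adj]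
    (hconn : G.Connected) (hdiam : ∀ u v : V, G.dist u v ≤ 2)
    (δ : ℕ) (hδ : δ = G.minDegree) (hδ2 : 2 ≤ δ) :
    (∃ F : Finset (Sym2 V), (F : Set (Sym2 V)) ⊆ G.edgeSet ∧ F.card = δ ∧
        ¬ (G.deleteEdges (F : Set (Sym2 V))).Connected ∧
        ¬ ∃ v : V, (F : Set (Sym2 V)) = G.incidenceSet v) ↔
    (∃ A B C : Set V,
        A ∪ B ∪ C = Set.univ ∧ Disjoint A B ∧ Disjoint A C ∧ Disjoint B C ∧
        Nat.card A = δ ∧ A.Pairwise G.Adj ∧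
        δ ≤ Nat.card ((B ∪ C : Set V)) ∧
        (∀ a ∈ A, (∃! b, b ∈ B ∧ G.Adj a b) ∧ ∀ c ∈ C, ¬ G.Adj a c) ∧
        (∀ b ∈ B, ∃ a ∈ A, G.Adj a b) ∧
        (∀ b ∈ B, ∀ c ∈ C, G.Adj b c)) := by
  classical
  subst hδ
  constructor
  · rintro ⟨F, -, hFc, hdisc, hstar⟩
    exact exists_partition_of_not_connected_deleteEdges hconn hdiam hFc hdisc hstar
  · rintro ⟨A, B, C, hcover, hAB, hAC, -, hcardA, hclique, hcardBC, hA, hB, hBC⟩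
    lift A to Finset V using A.toFinite
    exact exists_edgeCut_of_partition hcover hAB hAC (by simpa using hcardA) hclique hcardBC
      hA hB hBC hδ2
end

section
/- Let A and B be disjoint finite sets of points in the plane such that A ∪ B is not contained in a single line. Let T be a (non-degenerate) triangle with vertices a ∈ A, b ∈ B and c ∈ A ∪ B. Then a or b has a neighbour in the bivisibility graph B(A,B) lying in the closed triangle T but not on the segment ab. -/
/-- Adjacency in the bivisibility graph: one point from `A` and one from `B`, mutually
visible with respect to `A ∪ B` (no point of `A ∪ B` in the open segment between them). -/
def BivisAdj (A B : Finset (ℝ × ℝ)) (x y : ℝ × ℝ) : Prop :=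
  x ≠ y ∧ ((x ∈ A ∧ y ∈ B) ∨ (x ∈ B ∧ y ∈ A)) ∧
    ∀ p ∈ A ∪ B, p ∉ openSegment ℝ x y

/-- The bivisibility graph `B(A,B)` of two finite point sets in the plane. -/
def bivisibilityGraph (A B : Finset (ℝ × ℝ)) : SimpleGraph {p : ℝ × ℝ // p ∈ A ∪ B} where
  Adj u v := BivisAdj A B u.1 v.1
  symm := by
    constructor
    rintro u v ⟨hne, hab, h⟩
    refine ⟨hne.symm, by tauto, fun p hp => ?_⟩
    rw [openSegment_symm]
    exact h p hp
  loopless := by constructor; rintro u ⟨hne, -⟩; exact hne rfl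

/-!
Take a linear functional `f` that is constant on the line `ab` and larger at `c`. Among the
points of `A ∪ B` in the triangle lying strictly above the level of `a` and `b`, pick one, `p`,
with the smallest value of `f`. Every point of the open segment from `a` or `b` to `p` lies
in the triangle at a level strictly between, so none of them is in `A ∪ B`: `p` sees both `a`
and `b`, and is therefore adjacent to whichever of them has the other colour.
-/

theorem exists_linearMap_eq_of_not_collinear {K E : Type*} [Field K] [AddCommGroup E]
    [Module K E] {a b c : E} (h : ¬Collinear K ({a, b, c} : Set E)) :
    ∃ f : E →ₗ[K] K, f b = f a ∧ f c = f a + 1 := by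
  have hc : c - a ∉ K ∙ (b - a) := by
    intro hmem
    obtain ⟨r, hr⟩ := Submodule.mem_span_singleton.1 hmem
    refine h ((collinear_iff_of_mem (by simp : a ∈ _)).2 ⟨b - a, ?_⟩)
    simp only [Set.mem_insert_iff, Set.mem_singleton_iff, vadd_eq_add, forall_eq_or_imp,
      forall_eq]
    exact ⟨⟨0, by simp⟩, ⟨1, by simp⟩, ⟨r, by rw [hr, sub_add_cancel]⟩⟩
  obtain ⟨f, hfc, hker⟩ := Submodule.exists_le_ker_of_notMem hc
  have hfb : f (b - a) = 0 := hker (Submodule.mem_span_singleton_self _)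
  rw [map_sub] at hfb hfc
  refine ⟨(f c - f a)⁻¹ • f, ?_, ?_⟩
  · simp only [LinearMap.smul_apply, smul_eq_mul, sub_eq_zero.1 hfb]
  · simp only [LinearMap.smul_apply, smul_eq_mul]
    rw [← sub_eq_iff_eq_add', ← mul_sub, inv_mul_cancel₀ hfc]

theorem notMem_openSegment_of_le_or_le {𝕜 E : Type*} [Field 𝕜] [LinearOrder 𝕜]
    [IsStrictOrderedRing 𝕜] [AddCommGroup E] [Module 𝕜 E] {f : E →ₗ[𝕜] 𝕜} {T : Set E}
    (hT : Convex 𝕜 T) {e p q : E} (he : e ∈ T) (hp : p ∈ T) (hep : f e < f p)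
    (hq : q ∈ T → f q ≤ f e ∨ f p ≤ f q) : q ∉ openSegment 𝕜 e p := by
  intro hmem
  have hfq : f q ∈ Set.Ioo (f e) (f p) := by
    rw [← openSegment_eq_Ioo hep]
    exact image_openSegment 𝕜 f.toAffineMap e p ▸ Set.mem_image_of_mem f hmem
  rcases hq (hT.segment_subset he hp (openSegment_subset_segment 𝕜 e p hmem)) with h | h
  · exact h.not_gt hfq.1
  · exact h.not_gt hfq.2

theorem bivisibility_triangle_neighbour_general
    (A B : Finset (ℝ × ℝ))
    (a b c : ℝ × ℝ) (ha : a ∈ A) (hb : b ∈ B) (hc : c ∈ A ∪ B)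
    (htri : ¬ Collinear ℝ ({a, b, c} : Set (ℝ × ℝ))) :
    ∃ p ∈ A ∪ B, p ∈ convexHull ℝ ({a, b, c} : Set (ℝ × ℝ)) ∧ p ∉ segment ℝ a b ∧
      (BivisAdj A B a p ∨ BivisAdj A B b p) := by
  classical
  obtain ⟨f, hfb, hfc⟩ := exists_linearMap_eq_of_not_collinear htri
  set T := convexHull ℝ ({a, b, c} : Set (ℝ × ℝ))
  have hT : Convex ℝ T := convex_convexHull ℝ _
  have haT : a ∈ T := subset_convexHull ℝ _ (by simp)
  have hbT : b ∈ T := subset_convexHull ℝ _ (by simp)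
  have hcT : c ∈ T := subset_convexHull ℝ _ (by simp)
  set S := (A ∪ B).filter fun q => q ∈ T ∧ f a < f q
  obtain ⟨p, hpS, hpmin⟩ := S.exists_min_image f ⟨c, by simp [S, hc, hcT, hfc]⟩
  obtain ⟨hp, hpT, hfp⟩ : p ∈ A ∪ B ∧ p ∈ T ∧ f a < f p := Finset.mem_filter.1 hpS
  have hsees : ∀ e ∈ T, f e = f a → ∀ q ∈ A ∪ B, q ∉ openSegment ℝ e p :=
    fun e heT he q hq => notMem_openSegment_of_le_or_le hT heT hpT (he ▸ hfp) fun hqT =>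
      (le_or_gt (f q) (f a)).imp (he ▸ id) fun h => hpmin q (by simp [S, hq, hqT, h])
  have hpab : p ∉ segment ℝ a b := fun h =>
    hfp.ne' ((convex_hyperplane f.isLinear (f a)).segment_subset rfl hfb h)
  refine ⟨p, hp, hpT, hpab, ?_⟩
  rcases Finset.mem_union.1 hp with hpA | hpB
  · exact .inr ⟨by rintro rfl; exact hfp.ne' hfb, .inr ⟨hb, hpA⟩, hsees b hbT hfb⟩
  · exact .inl ⟨by rintro rfl; exact hfp.ne rfl, .inl ⟨ha, hpB⟩, hsees a haT rfl⟩

/-- Let `A` and `B` be disjoint finite point sets with `A ∪ B` not collinear, and let `T` be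
a non-degenerate triangle with vertices `a ∈ A`, `b ∈ B` and `c ∈ A ∪ B`. Then `a` or
`b` has a neighbour in the bivisibility graph `B(A,B)` lying in the closed triangle `T`
but not on the segment `ab`. -/
theorem bivisibility_triangle_neighbour
    (A B : Finset (ℝ × ℝ)) (hAB : Disjoint A B)
    (hncol : ¬ Collinear ℝ ((A ∪ B : Finset (ℝ × ℝ)) : Set (ℝ × ℝ)))
    (a b c : ℝ × ℝ) (ha : a ∈ A) (hb : b ∈ B) (hc : c ∈ A ∪ B)
    (htri : ¬ Collinear ℝ ({a, b, c} : Set (ℝ × ℝ))) :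
    ∃ p ∈ A ∪ B, p ∈ convexHull ℝ ({a, b, c} : Set (ℝ × ℝ)) ∧ p ∉ segment ℝ a b ∧
      (BivisAdj A B a p ∨ BivisAdj A B b p) :=
  bivisibility_triangle_neighbour_general A B a b c ha hb hc htri
end

section
/- Let A and B be disjoint finite sets of points in the plane such that A ∪ B is not contained in a single line. Then the bivisibility graph B(A,B) has at most one connected component containing an edge; equivalently, every two edges of B(A,B) lie in the same connected component. -/
theorem collinear_coe_affineSpan_iff {k V P : Type*} [DivisionRing k] [AddCommGroup V]
    [Module k V] [AddTorsor V P] {s : Set P} :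
    Collinear k (affineSpan k s : Set P) ↔ Collinear k s := by
  rw [Collinear, Collinear, ← direction_affineSpan k s]
  rfl

section Geometry

variable {E : Type*} [AddCommGroup E] [Module ℝ E]

theorem exists_mem_forall_notMem_openSegment_of_affineMap (f : E →ᵃ[ℝ] ℝ) (P : Finset E)
    (hP : ∃ p ∈ P, f p ≠ 0) :
    ∃ c ∈ P, f c ≠ 0 ∧ ∀ m, f m = 0 → ∀ w ∈ P, w ∉ openSegment ℝ c m := by
  classical
  obtain ⟨c, hc, hmin⟩ := (P.filter (f · ≠ 0)).exists_min_image (|f ·|) (by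
    obtain ⟨p, hp, hfp⟩ := hP
    exact ⟨p, Finset.mem_filter.2 ⟨hp, hfp⟩⟩)
  rw [Finset.mem_filter] at hc
  refine ⟨c, hc.1, hc.2, fun m hm w hwP hw => ?_⟩
  obtain ⟨α, β, hα, hβ, hαβ, hfw⟩ : f w ∈ openSegment ℝ (f c) 0 := by
    rw [← hm, ← image_openSegment]
    exact ⟨w, hw, rfl⟩
  rw [smul_zero, add_zero, smul_eq_mul] at hfw
  have hmin_w := hmin w (Finset.mem_filter.2 ⟨hwP, hfw ▸ mul_ne_zero hα.ne' hc.2⟩)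
  rw [← hfw, abs_mul, abs_of_pos hα] at hmin_w
  nlinarith [abs_pos.2 hc.2]

theorem AffineSubspace.exists_affineMap_eq_zero_ne_zero {S : AffineSubspace ℝ E} {a c : E}
    (ha : a ∈ S) (hc : c ∉ S) : ∃ f : E →ᵃ[ℝ] ℝ, (∀ p ∈ S, f p = 0) ∧ f c ≠ 0 := by
  obtain ⟨g, hgc, hker⟩ :=
    Submodule.exists_le_ker_of_notMem (mt (vsub_right_mem_direction_iff_mem ha c).1 hc)
  refine ⟨g.toAffineMap - AffineMap.const ℝ E (g a), fun p hp => ?_, ?_⟩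
  · have := hker ((vsub_right_mem_direction_iff_mem ha p).2 hp)
    simpa [sub_eq_zero] using this
  · simpa [sub_eq_zero] using hgc

theorem exists_mem_forall_notMem_openSegment (P : Finset E) (S : AffineSubspace ℝ E) {p : E}
    (hp : p ∈ P) (hpS : p ∉ S) :
    ∃ c ∈ P, c ∉ S ∧ ∀ m ∈ S, ∀ w ∈ P, w ∉ openSegment ℝ c m := by
  rcases (S : Set E).eq_empty_or_nonempty with hS | ⟨a, ha⟩
  · exact ⟨p, hp, hpS, fun m hm => (hS ▸ hm : m ∈ (∅ : Set E)).elim⟩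
  obtain ⟨f, hfS, hfp⟩ := S.exists_affineMap_eq_zero_ne_zero ha hpS
  obtain ⟨c, hc, hfc, hvis⟩ := exists_mem_forall_notMem_openSegment_of_affineMap f P ⟨p, hp, hfp⟩
  exact ⟨c, hc, fun hcS => hfc (hfS c hcS), fun m hm => hvis m (hfS m hm)⟩

theorem forall_notMem_openSegment_of_collinear_erase [DecidableEq E] {P : Finset E} {z : E}
    (hz : z ∈ P) (hP : ¬Collinear ℝ (P : Set E)) (hcol : Collinear ℝ (P.erase z : Set E)) :
    ∀ m ∈ P.erase z, ∀ w ∈ P, w ∉ openSegment ℝ z m := by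
  have hzS : z ∉ affineSpan ℝ (P.erase z : Set E) := fun h => hP <| by
    rwa [← Finset.insert_erase hz, Finset.coe_insert, collinear_insert_iff_of_mem_affineSpan h]
  obtain ⟨c, hc, hcS, hvis⟩ := exists_mem_forall_notMem_openSegment P _ hz hzS
  obtain rfl : c = z := by
    by_contra hcz
    exact hcS (subset_affineSpan ℝ _ (Finset.mem_erase.2 ⟨hcz, hc⟩))
  exact fun m hm => hvis m (subset_affineSpan ℝ _ hm)

end Geometry

theorem collinear_of_extremePoints_subset_pair {E : Type*} [NormedAddCommGroup E]
    [NormedSpace ℝ E] {P : Set E} (hP : P.Finite) {e₁ e₂ : E}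
    (h : (convexHull ℝ P).extremePoints ℝ ⊆ {e₁, e₂}) : Collinear ℝ P := by
  refine (collinear_coe_affineSpan_iff.2 (collinear_pair ℝ e₁ e₂)).subset ?_
  calc P ⊆ convexHull ℝ P := subset_convexHull ℝ P
    _ = closure (convexHull ℝ ((convexHull ℝ P).extremePoints ℝ)) :=
      (closure_convexHull_extremePoints (hP.isCompact_convexHull ℝ) (convex_convexHull ℝ P)).symm
    _ ⊆ convexHull ℝ {e₁, e₂} :=
      closure_minimal (convexHull_mono h) ((Set.toFinite _).isClosed_convexHull ℝ)
    _ ⊆ affineSpan ℝ {e₁, e₂} := convexHull_subset_affineSpan _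

theorem BivisAdj.symm {A B : Finset (ℝ × ℝ)} {x y : ℝ × ℝ} (h : BivisAdj A B x y) :
    BivisAdj A B y x :=
  ⟨h.1.symm, h.2.1.symm.imp And.symm And.symm, fun p hp => openSegment_symm ℝ x y ▸ h.2.2 p hp⟩

theorem BivisAdj.left_mem {A B : Finset (ℝ × ℝ)} {x y : ℝ × ℝ} (h : BivisAdj A B x y) :
    x ∈ A ∪ B :=
  Finset.mem_union.2 (h.2.1.imp And.left And.left)

/-- `bivisibilityGraph A B` extended by isolated vertices to all of `ℝ × ℝ`, so that the graphs
of different pairs `A`, `B` share a vertex type and can be compared. -/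
def planeBivisibilityGraph (A B : Finset (ℝ × ℝ)) : SimpleGraph (ℝ × ℝ) where
  Adj := BivisAdj A B
  symm := ⟨fun _ _ => BivisAdj.symm⟩
  loopless := ⟨fun _ h => h.1 rfl⟩

namespace SimpleGraph

variable {V : Type*} (G : SimpleGraph V)

def starCenters (u : V) : Set V :=
  {z | ∀ c e, G.Adj c e → G.Reachable u c → z = c ∨ z = e}

variable {G}

theorem starCenters_subset_singleton {a b c e : V} (hab : G.Adj a b) (hce : G.Adj c e)
    (hac : G.Reachable a c) (hca : c ≠ a) (hcb : c ≠ b) : G.starCenters a ⊆ {e} := by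
  intro z hz
  rcases hz c e hce hac with rfl | rfl
  · rcases hz a b hab .rfl with rfl | rfl <;> contradiction
  · rfl

end SimpleGraph

namespace planeBivisibilityGraph

variable {A B : Finset (ℝ × ℝ)} {a b c : ℝ × ℝ}

theorem adj_or_adj_of_forall_notMem_openSegment (hab : (planeBivisibilityGraph A B).Adj a b)
    (hc : c ∈ A ∪ B) (hca : c ≠ a) (hcb : c ≠ b) (ha : ∀ w ∈ A ∪ B, w ∉ openSegment ℝ c a)
    (hb : ∀ w ∈ A ∪ B, w ∉ openSegment ℝ c b) :
    (planeBivisibilityGraph A B).Adj c a ∨ (planeBivisibilityGraph A B).Adj c b := by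
  obtain ⟨-, ⟨haA, hbB⟩ | ⟨haB, hbA⟩, -⟩ := hab <;> rcases Finset.mem_union.1 hc with hcA | hcB
  · exact .inr ⟨hcb, .inl ⟨hcA, hbB⟩, hb⟩
  · exact .inl ⟨hca, .inr ⟨hcB, haA⟩, ha⟩
  · exact .inl ⟨hca, .inl ⟨hcA, haB⟩, ha⟩
  · exact .inr ⟨hcb, .inr ⟨hcB, hbA⟩, hb⟩

theorem reachable_of_forall_notMem_openSegment (hab : (planeBivisibilityGraph A B).Adj a b)
    (hc : c ∈ A ∪ B) (hvis : ∀ m ∈ (A ∪ B).erase c, ∀ w ∈ A ∪ B, w ∉ openSegment ℝ c m) :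
    (planeBivisibilityGraph A B).Reachable a c := by
  obtain rfl | hca := eq_or_ne c a
  · rfl
  obtain rfl | hcb := eq_or_ne c b
  · exact hab.reachable
  rcases adj_or_adj_of_forall_notMem_openSegment hab hc hca hcb
    (hvis a (Finset.mem_erase.2 ⟨hca.symm, BivisAdj.left_mem hab⟩))
    (hvis b (Finset.mem_erase.2 ⟨hcb.symm, BivisAdj.left_mem hab.symm⟩)) with hac | hbc
  · exact hac.symm.reachable
  · exact hab.reachable.trans hbc.symm.reachable

theorem exists_starCenters_subset_singleton
    (hncol : ¬Collinear ℝ ((A ∪ B : Finset (ℝ × ℝ)) : Set (ℝ × ℝ)))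
    (hab : (planeBivisibilityGraph A B).Adj a b) :
    ∃ e, (planeBivisibilityGraph A B).starCenters a ⊆ {e} := by
  obtain ⟨p, hp, hpl⟩ : ∃ p ∈ A ∪ B, p ∉ line[ℝ, a, b] := by
    by_contra! h
    exact hncol ((collinear_coe_affineSpan_iff.2 (collinear_pair ℝ a b)).subset h)
  obtain ⟨c, hc, hcl, hvis⟩ := exists_mem_forall_notMem_openSegment _ _ hp hpl
  have hca : c ≠ a := fun h => hcl (h ▸ left_mem_affineSpan_pair ℝ a b)
  have hcb : c ≠ b := fun h => hcl (h ▸ right_mem_affineSpan_pair ℝ a b)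
  have ha := hvis a (left_mem_affineSpan_pair ℝ a b)
  have hb := hvis b (right_mem_affineSpan_pair ℝ a b)
  rcases adj_or_adj_of_forall_notMem_openSegment hab hc hca hcb ha hb with hce | hce
  · exact ⟨a, SimpleGraph.starCenters_subset_singleton hab hce hce.symm.reachable hca hcb⟩
  · exact ⟨b, SimpleGraph.starCenters_subset_singleton hab hce
      (hab.reachable.trans hce.symm.reachable) hca hcb⟩

theorem erase_le {z : ℝ × ℝ}
    (hz : z ∈ (convexHull ℝ ((A ∪ B : Finset (ℝ × ℝ)) : Set (ℝ × ℝ))).extremePoints ℝ) :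
    planeBivisibilityGraph (A.erase z) (B.erase z) ≤ planeBivisibilityGraph A B := by
  rintro s t ⟨hst, hmem, hvis⟩
  have hs : s ∈ (A ∪ B).erase z := by
    rw [Finset.erase_union_distrib]; rcases hmem with h | h <;> simp [h.1]
  have ht : t ∈ (A ∪ B).erase z := by
    rw [Finset.erase_union_distrib]; rcases hmem with h | h <;> simp [h.2]
  refine ⟨hst, hmem.imp (And.imp Finset.mem_of_mem_erase Finset.mem_of_mem_erase)
    (And.imp Finset.mem_of_mem_erase Finset.mem_of_mem_erase), fun p hp hpst => ?_⟩
  obtain rfl | hpz := eq_or_ne p z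
  · exact Finset.ne_of_mem_erase hs (hz.2 (subset_convexHull ℝ _ (Finset.mem_of_mem_erase hs))
      (subset_convexHull ℝ _ (Finset.mem_of_mem_erase ht)) hpst)
  · exact hvis p (Finset.erase_union_distrib A B z ▸ Finset.mem_erase.2 ⟨hpz, hp⟩) hpst

theorem adj_erase {s t z : ℝ × ℝ} (h : (planeBivisibilityGraph A B).Adj s t) (hs : s ≠ z)
    (ht : t ≠ z) : (planeBivisibilityGraph (A.erase z) (B.erase z)).Adj s t := by
  obtain ⟨hst, hmem, hvis⟩ := h
  refine ⟨hst, ?_, fun p hp => hvis p ?_⟩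
  · simpa only [Finset.mem_erase, hs, ht, ne_eq, not_false_eq_true, true_and] using hmem
  · rw [← Finset.erase_union_distrib] at hp
    exact Finset.mem_of_mem_erase hp

theorem reachable_of_collinear_erase {z u v x y : ℝ × ℝ} (hz : z ∈ A ∪ B)
    (hncol : ¬Collinear ℝ ((A ∪ B : Finset (ℝ × ℝ)) : Set (ℝ × ℝ)))
    (hcol : Collinear ℝ (((A ∪ B).erase z : Finset (ℝ × ℝ)) : Set (ℝ × ℝ)))
    (huv : (planeBivisibilityGraph A B).Adj u v) (hxy : (planeBivisibilityGraph A B).Adj x y) :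
    (planeBivisibilityGraph A B).Reachable u x :=
  have hvis := forall_notMem_openSegment_of_collinear_erase hz hncol hcol
  (reachable_of_forall_notMem_openSegment huv hz hvis).trans
    (reachable_of_forall_notMem_openSegment hxy hz hvis).symm

theorem mem_starCenters_or_mem_starCenters {z u x : ℝ × ℝ}
    (hz : z ∈ (convexHull ℝ ((A ∪ B : Finset (ℝ × ℝ)) : Set (ℝ × ℝ))).extremePoints ℝ)
    (hux : ¬(planeBivisibilityGraph A B).Reachable u x)
    (herase : ∀ {c e c' e'}, (planeBivisibilityGraph (A.erase z) (B.erase z)).Adj c e →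
      (planeBivisibilityGraph (A.erase z) (B.erase z)).Adj c' e' →
      (planeBivisibilityGraph (A.erase z) (B.erase z)).Reachable c c') :
    z ∈ (planeBivisibilityGraph A B).starCenters u ∨
      z ∈ (planeBivisibilityGraph A B).starCenters x := by
  by_contra! hzz
  simp only [SimpleGraph.starCenters, Set.mem_ofPred_eq, not_forall, not_or] at hzz
  obtain ⟨⟨c, e, hce, huc, hzc, hze⟩, ⟨c', e', hce', hxc', hzc', hze'⟩⟩ := hzz
  have hcc' := herase (adj_erase hce (Ne.symm hzc) (Ne.symm hze))
    (adj_erase hce' (Ne.symm hzc') (Ne.symm hze'))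
  exact hux (huc.trans ((hcc'.mono (erase_le hz)).trans hxc'.symm))

theorem reachable_of_adj_of_adj (hncol : ¬Collinear ℝ ((A ∪ B : Finset (ℝ × ℝ)) : Set (ℝ × ℝ)))
    {u v x y : ℝ × ℝ} (huv : (planeBivisibilityGraph A B).Adj u v)
    (hxy : (planeBivisibilityGraph A B).Adj x y) : (planeBivisibilityGraph A B).Reachable u x := by
  induction hn : (A ∪ B).card using Nat.strong_induction_on generalizing A B u v x y with
  | _ n IH =>
  by_cases hbase : ∃ z ∈ A ∪ B, Collinear ℝ (((A ∪ B).erase z : Finset (ℝ × ℝ)) : Set (ℝ × ℝ))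
  · obtain ⟨z, hz, hcol⟩ := hbase
    exact reachable_of_collinear_erase hz hncol hcol huv hxy
  push Not at hbase
  by_contra hux
  obtain ⟨e₁, he₁⟩ := exists_starCenters_subset_singleton hncol huv
  obtain ⟨e₂, he₂⟩ := exists_starCenters_subset_singleton hncol hxy
  refine hncol (collinear_of_extremePoints_subset_pair (A ∪ B).finite_toSet (e₁ := e₁) (e₂ := e₂)
    fun z hz => ?_)
  have hzP := extremePoints_convexHull_subset hz
  refine (mem_starCenters_or_mem_starCenters hz hux fun hce hce' => ?_).imp (he₁ ·) (he₂ ·)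
  exact IH _ (hn ▸ Finset.card_erase_lt_of_mem hzP)
    (Finset.erase_union_distrib A B z ▸ hbase z hzP) hce hce'
    (by rw [← Finset.erase_union_distrib])

end planeBivisibilityGraph

theorem bivisibilityGraph_reachable_of_reachable {A B : Finset (ℝ × ℝ)}
    {u x : {p : ℝ × ℝ // p ∈ A ∪ B}} (h : (planeBivisibilityGraph A B).Reachable u x) :
    (bivisibilityGraph A B).Reachable u x := by
  obtain ⟨u, hu⟩ := u
  obtain ⟨x, hx⟩ := x
  replace h : Relation.ReflTransGen (BivisAdj A B) u x :=
    (SimpleGraph.reachable_iff_reflTransGen _ _).1 h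
  induction h with
  | refl => rfl
  | tail _ hyx ih =>
    exact (ih (BivisAdj.left_mem hyx)).trans
      (SimpleGraph.Adj.reachable (G := bivisibilityGraph A B) (u := ⟨_, _⟩) (v := ⟨_, hx⟩) hyx)

theorem bivisibility_one_nontrivial_component_general
    (A B : Finset (ℝ × ℝ))
    (hncol : ¬ Collinear ℝ ((A ∪ B : Finset (ℝ × ℝ)) : Set (ℝ × ℝ))) :
    ∀ u v x y : {p : ℝ × ℝ // p ∈ A ∪ B},
      (bivisibilityGraph A B).Adj u v → (bivisibilityGraph A B).Adj x y →
      (bivisibilityGraph A B).Reachable u x :=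
  fun _ _ _ _ huv hxy => bivisibilityGraph_reachable_of_reachable
    (planeBivisibilityGraph.reachable_of_adj_of_adj hncol huv hxy)

/-- Let `A` and `B` be disjoint finite point sets with `A ∪ B` not collinear. Then the
bivisibility graph `B(A,B)` has at most one connected component containing an edge:
the endpoints of any two edges are joined by paths. -/
theorem bivisibility_one_nontrivial_component
    (A B : Finset (ℝ × ℝ)) (hAB : Disjoint A B)
    (hncol : ¬ Collinear ℝ ((A ∪ B : Finset (ℝ × ℝ)) : Set (ℝ × ℝ))) :
    ∀ u v x y : {p : ℝ × ℝ // p ∈ A ∪ B},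
      (bivisibilityGraph A B).Adj u v → (bivisibilityGraph A B).Adj x y →
      (bivisibilityGraph A B).Reachable u x :=
  bivisibility_one_nontrivial_component_general A B hncol
end
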